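/- arXiv:1602.07816 — 6 statements merged into one kernel-verified Lean document; each statement's English description precedes it below -/
import Mathlib

section
/- For every integer k ≥ 2, every simple graph G on n vertices with linear arboricity at most k has bandwidth at most ⌈2(k−1)n/(2k−1)⌉. (The paper states this bound as 3(k−1)n/(4k−2); its proof establishes the bound max{n−x, 2x(k−1)} with x = ⌊n/(2k−1)⌋, which equals 2(k−1)n/(2k−1) up to rounding.) -/
/-- A linear forest: a simple graph each of whose connected components is a path,
equivalently an acyclic graph of maximum degree at most two. -/
def IsLinearForest {V : Type} [Fintype V] (F : SimpleGraph V) : Prop :=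
  F.IsAcyclic ∧ ∀ v : V, (F.neighborSet v).ncard ≤ 2

/-- The linear arboricity of `G` is at most `k` if the edge set of `G` is the union of
the edge sets of `k` linear forests on the same vertex set. -/
def LinearArboricityLE {V : Type} [Fintype V] (G : SimpleGraph V) (k : ℕ) : Prop :=
  ∃ F : Fin k → SimpleGraph V, (∀ i, IsLinearForest (F i)) ∧
    G.edgeSet = ⋃ i, (F i).edgeSet

/-- The bandwidth of `G` is at most `b` if the vertices can be labelled bijectively by
`1, …, n` so that the labels of adjacent vertices differ by at most `b`. -/
def BandwidthLE {V : Type} [Fintype V] (G : SimpleGraph V) (b : ℕ) : Prop :=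
  ∃ σ : V ≃ Fin (Fintype.card V),
    ∀ u v : V, G.Adj u v → |((σ u : ℕ) : ℤ) - ((σ v : ℕ) : ℤ)| ≤ (b : ℤ)


open List
open scoped Classical
set_option linter.unusedSectionVars false
set_option maxHeartbeats 1000000

section Aux

variable {V : Type} [Fintype V] [DecidableEq V]

lemma forest_low_degree (F : SimpleGraph V) [DecidableRel F.Adj]
    (hA : F.IsAcyclic) (hd : ∀ v : V, (F.neighborFinset v).card ≤ 2)
    (s : Finset V) (hs : s.Nonempty) :
    ∃ v ∈ s, (s.filter (F.Adj v)).card ≤ 1 := by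
  by_contra hcon
  push_neg at hcon
  -- every v ∈ s has its (exactly two) neighbors all inside s
  have hnb : ∀ v ∈ s, F.neighborFinset v = s.filter (F.Adj v) := by
    intro v hv
    have h1 : s.filter (F.Adj v) ⊆ F.neighborFinset v := by
      intro u hu
      simp only [Finset.mem_filter] at hu
      simpa [SimpleGraph.mem_neighborFinset] using hu.2
    have h2 := hcon v hv
    exact (Finset.eq_of_subset_of_card_le h1 (le_trans (hd v) h2)).symm
  have hcard2 : ∀ v ∈ s, (F.neighborFinset v).card = 2 := by
    intro v hv
    have h1 := hcon v hv
    have h2 := hd v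
    rw [hnb v hv] at h2 ⊢
    omega
  have hnbs : ∀ v ∈ s, ∀ u, F.Adj v u → u ∈ s := by
    intro v hv u hu
    have : u ∈ F.neighborFinset v := by simpa [SimpleGraph.mem_neighborFinset]
    rw [hnb v hv] at this
    exact (Finset.mem_filter.mp this).1
  -- "next" function: other neighbor
  have key : ∀ v u : V, ∃ w : V, v ∈ s → F.Adj v u →
      (F.Adj v w ∧ w ≠ u ∧ w ∈ s) := by
    intro v u
    by_cases hv : v ∈ s ∧ F.Adj v u
    · obtain ⟨hv, hadj⟩ := hv
      have hu : u ∈ F.neighborFinset v := by simpa [SimpleGraph.mem_neighborFinset]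
      have : ((F.neighborFinset v).erase u).Nonempty := by
        rw [← Finset.card_pos, Finset.card_erase_of_mem hu, hcard2 v hv]
        norm_num
      obtain ⟨w, hw⟩ := this
      refine ⟨w, fun _ _ => ?_⟩
      have hw1 := Finset.ne_of_mem_erase hw
      have hw2 := Finset.mem_of_mem_erase hw
      have hadjw : F.Adj v w := by simpa [SimpleGraph.mem_neighborFinset] using hw2
      exact ⟨hadjw, hw1, hnbs v hv w hadjw⟩
    · exact ⟨u, fun h1 h2 => absurd ⟨h1, h2⟩ hv⟩
  choose nxt hnxt using key
  -- starting pair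
  obtain ⟨v₀, hv₀⟩ := hs
  have : (F.neighborFinset v₀).Nonempty := by
    rw [← Finset.card_pos, hcard2 v₀ hv₀]; omega
  obtain ⟨u₀, hu₀⟩ := this
  have hadj₀ : F.Adj v₀ u₀ := by simpa [SimpleGraph.mem_neighborFinset] using hu₀
  -- the sequence of pairs
  let f : ℕ → V × V := fun n => Nat.rec (v₀, u₀) (fun _ p => (p.2, nxt p.2 p.1)) n
  let w : ℕ → V := fun n => (f n).1
  have hf2 : ∀ n, (f n).2 = w (n + 1) := fun n => rfl
  have hinv : ∀ n, w n ∈ s ∧ F.Adj (w n) (w (n + 1)) := by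
    intro n
    induction n with
    | zero => exact ⟨hv₀, hadj₀⟩
    | succ m ih =>
      have hm : w (m + 1) ∈ s := hnbs (w m) ih.1 _ ih.2
      have h2 : w (m + 2) = nxt (w (m + 1)) (w m) := rfl
      have := hnxt (w (m + 1)) (w m) hm ih.2.symm
      rw [← h2] at this
      exact ⟨hm, this.1⟩
  have hadj : ∀ n, F.Adj (w n) (w (n + 1)) := fun n => (hinv n).2
  have hnbt : ∀ n, w (n + 2) ≠ w n := by
    intro n
    have h2 : w (n + 2) = nxt (w (n + 1)) (w n) := rfl
    have := hnxt (w (n + 1)) (w n) (hnbs (w n) (hinv n).1 _ (hinv n).2) (hadj n).symm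
    rw [← h2] at this
    exact this.2.1
  -- walks
  let W : (n : ℕ) → F.Walk (w 0) (w n) := fun n =>
    Nat.rec SimpleGraph.Walk.nil (fun m p => p.concat (hadj m)) n
  have hWsupp : ∀ n, (W n).support = (List.range (n + 1)).map w := by
    intro n
    induction n with
    | zero => simp [W, List.range_succ]
    | succ m ih =>
      have : W (m + 1) = (W m).concat (hadj m) := rfl
      rw [this, SimpleGraph.Walk.support_concat, ih]
      simp [List.range_succ]
  have hWedges : ∀ n, (W n).edges = (List.range n).map (fun i => s(w i, w (i + 1))) := by
    intro n
    induction n with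
    | zero => simp [W]
    | succ m ih =>
      have : W (m + 1) = (W m).concat (hadj m) := rfl
      rw [this, SimpleGraph.Walk.edges_concat, ih, List.range_succ]
      simp
  have hWpath : ∀ n, (W n).IsPath := by
    intro n
    induction n with
    | zero => simp [W]
    | succ m ih =>
      have hW : W (m + 1) = (W m).concat (hadj m) := rfl
      by_cases hmem : w (m + 1) ∈ (W m).support
      · exfalso
        have dpath := ih.dropUntil hmem
        have hedge : s(w m, w (m + 1)) ∉ ((W m).dropUntil (w (m + 1)) hmem).edges := by
          intro hin
          have hin' := SimpleGraph.Walk.edges_dropUntil_subset _ hmem hin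
          rw [hWedges m] at hin'
          simp only [List.mem_map, List.mem_range] at hin'
          obtain ⟨i, hi, hieq⟩ := hin'
          have hnd : ((List.range (m + 1)).map w).Nodup := by
            rw [← hWsupp m]; exact ih.support_nodup
          have winj : ∀ a ∈ List.range (m+1), ∀ b ∈ List.range (m+1), w a = w b → a = b :=
            List.inj_on_of_nodup_map hnd
          rw [Sym2.eq_iff] at hieq
          rcases hieq with ⟨h1, h2⟩ | ⟨h1, h2⟩
          · have : i = m := winj i (by simp; omega) m (by simp) h1
            omega
          · have him : i + 1 = m :=
              winj (i+1) (by simp; omega) m (by simp) h2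
            have hne : w (i + 2) ≠ w i := hnbt i
            rw [show i + 2 = m + 1 by omega] at hne
            exact hne h1.symm
        have hcyc := SimpleGraph.Path.cons_isCycle
          (⟨(W m).dropUntil (w (m + 1)) hmem, dpath⟩ : F.Path (w (m+1)) (w m))
          (hadj m) hedge
        exact hA _ hcyc
      · rw [SimpleGraph.Walk.isPath_def, hW, SimpleGraph.Walk.support_concat,
          List.nodup_append']
        refine ⟨ih.support_nodup, List.nodup_singleton _, ?_⟩
        intro a ha hb
        simp only [List.mem_singleton] at hb
        subst hb
        exact hmem ha
  have hlen : ∀ n, (W n).length = n := by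
    intro n
    induction n with
    | zero => rfl
    | succ m ih =>
      have : W (m + 1) = (W m).concat (hadj m) := rfl
      rw [this, SimpleGraph.Walk.length_concat, ih]
  have hlt := (hWpath (Fintype.card V)).length_lt
  rw [hlen] at hlt
  omega


def ConsecIn (F : SimpleGraph V) (s : Finset V) (l : List V) : Prop :=
  ∀ u v : V, F.Adj u v → u ∈ s → v ∈ s →
    ∃ i, (l[i]? = some u ∧ l[(i+1)]? = some v) ∨
         (l[i]? = some v ∧ l[(i+1)]? = some u)

lemma consec_pair (F : SimpleGraph V) [DecidableRel F.Adj] (l : List V)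
    (hcons : ConsecIn F Finset.univ l) :
    ∀ e ∈ F.edgeFinset, ∃ i, ∃ u v : V,
      l[i]? = some u ∧ l[(i+1)]? = some v ∧ e = s(u,v) := by
  intro e he
  induction e with
  | _ u v =>
    rw [SimpleGraph.mem_edgeFinset, SimpleGraph.mem_edgeSet] at he
    obtain ⟨i, hi | hi⟩ := hcons u v he (Finset.mem_univ u) (Finset.mem_univ v)
    · exact ⟨i, u, v, hi.1, hi.2, rfl⟩
    · exact ⟨i, v, u, hi.1, hi.2, Sym2.eq_swap⟩

/-- the canonical index function of edges -/
noncomputable def edgeIdx (l : List V) (e : Sym2 V) : ℕ :=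
  if h : ∃ i, ∃ u v : V, l[i]? = some u ∧ l[(i+1)]? = some v ∧ e = s(u,v)
  then Nat.find h else 0

lemma edgeIdx_spec (F : SimpleGraph V) [DecidableRel F.Adj] (l : List V)
    (hcons : ConsecIn F Finset.univ l) {e : Sym2 V} (he : e ∈ F.edgeFinset) :
    ∃ u v : V, l[(edgeIdx l e)]? = some u ∧ l[(edgeIdx l e + 1)]? = some v ∧
      e = s(u,v) := by
  have h := consec_pair F l hcons e he
  unfold edgeIdx
  rw [dif_pos h]
  exact Nat.find_spec h

lemma edgeIdx_injOn (F : SimpleGraph V) [DecidableRel F.Adj] (l : List V)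
    (hcons : ConsecIn F Finset.univ l) :
    Set.InjOn (edgeIdx l) (F.edgeFinset : Set (Sym2 V)) := by
  intro e he e' he' heq
  obtain ⟨u, v, h1, h2, h3⟩ := edgeIdx_spec F l hcons (by simpa using he)
  obtain ⟨u', v', h1', h2', h3'⟩ := edgeIdx_spec F l hcons (by simpa using he')
  rw [heq] at h1 h2
  rw [h1'] at h1
  rw [h2'] at h2
  rw [h3, h3']
  rw [Option.some_inj] at h1 h2
  rw [h1, h2]

lemma forest_edge_card (F : SimpleGraph V) [DecidableRel F.Adj] (l : List V)
    (hcons : ConsecIn F Finset.univ l) :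
    F.edgeFinset.card ≤ l.length - 1 := by
  have : (Finset.range (l.length - 1)).card = l.length - 1 := Finset.card_range _
  rw [← this]
  apply Finset.card_le_card_of_injOn (edgeIdx l) _ (edgeIdx_injOn F l hcons)
  intro e he
  obtain ⟨u, v, h1, h2, h3⟩ := edgeIdx_spec F l hcons he
  rw [List.getElem?_eq_some_iff] at h2
  obtain ⟨hlt, _⟩ := h2
  exact Finset.mem_range.mpr (by omega)

lemma jump_card (bl : ℕ → ℕ) (hmono : Monotone bl) (B : ℕ) (hbd : ∀ i, bl i ≤ B)
    (L : ℕ) : ((Finset.range L).filter fun i => bl i ≠ bl (i+1)).card ≤ B := by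
  have hIcc : (Finset.Icc 1 B).card = B := by simp
  rw [← hIcc]
  apply Finset.card_le_card_of_injOn (fun i => bl (i+1))
  · intro i hi
    simp only [Finset.mem_coe, Finset.mem_filter, Finset.mem_range] at hi
    have h1 : bl i < bl (i+1) := lt_of_le_of_ne (hmono (by omega)) hi.2
    exact Finset.mem_Icc.mpr ⟨by show 1 ≤ bl (i+1); omega, hbd _⟩
  · intro i hi j hj heq
    simp only [Finset.coe_filter, Set.mem_setOf_eq, Finset.mem_range] at hi hj
    have heq' : bl (i+1) = bl (j+1) := heq
    by_contra hne
    rcases Nat.lt_or_ge i j with h | h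
    · have h1 : bl (i+1) ≤ bl j := hmono (by omega)
      have h2 : bl j ≤ bl (j+1) := hmono (by omega)
      rw [← heq'] at h2
      exact hj.2 ((Nat.le_antisymm h2 h1).trans heq')
    · have hij : j < i := by omega
      have h1 : bl (j+1) ≤ bl i := hmono (by omega)
      have h2 : bl i ≤ bl (i+1) := hmono (by omega)
      rw [heq'] at h2
      exact hi.2 ((Nat.le_antisymm h2 h1).trans heq'.symm)

lemma forest_cross_card (F : SimpleGraph V) [DecidableRel F.Adj] (l : List V)
    (hnd : l.Nodup) (hcons : ConsecIn F Finset.univ l)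
    (bl : ℕ → ℕ) (hmono : Monotone bl) (B : ℕ) (hbd : ∀ i, bl i ≤ B) :
    (F.edgeFinset.filter fun e =>
      ¬ (Sym2.map (fun v : V => bl (l.idxOf v)) e).IsDiag).card ≤ B := by
  classical
  set J := (Finset.range l.length).filter fun i => bl i ≠ bl (i+1) with hJ
  have hJcard : J.card ≤ B := jump_card bl hmono B hbd _
  -- each cross edge maps into J under edgeIdx
  have hmaps : ∀ e ∈ F.edgeFinset.filter (fun e =>
      ¬ (Sym2.map (fun v : V => bl (l.idxOf v)) e).IsDiag), edgeIdx l e ∈ J := by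
    intro e he
    rw [Finset.mem_filter] at he
    obtain ⟨u, v, h1, h2, h3⟩ := edgeIdx_spec F l hcons he.1
    have hiu : l.idxOf u = edgeIdx l e := by
      rw [List.getElem?_eq_some_iff] at h1
      obtain ⟨hlt, hev⟩ := h1
      subst hev
      simpa using List.Nodup.idxOf_getElem hnd _ hlt
    have hiv : l.idxOf v = edgeIdx l e + 1 := by
      rw [List.getElem?_eq_some_iff] at h2
      obtain ⟨hlt, hev⟩ := h2
      subst hev
      simpa using List.Nodup.idxOf_getElem hnd _ hlt
    have hcross := he.2
    rw [h3, Sym2.map_pair_eq, Sym2.mk_isDiag_iff] at hcross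
    rw [hiu, hiv] at hcross
    have hlt : edgeIdx l e < l.length := by
      rw [List.getElem?_eq_some_iff] at h1
      exact h1.1
    exact Finset.mem_filter.mpr ⟨Finset.mem_range.mpr hlt, hcross⟩
  exact le_trans
    (Finset.card_le_card_of_injOn (edgeIdx l) hmaps
      ((edgeIdx_injOn F l hcons).mono (Finset.coe_subset.mpr (Finset.filter_subset _ _))))
    hJcard

lemma pairs_card (D : ℕ) :
    (((Finset.range D) ×ˢ (Finset.range D)).filter fun p => p.1 < p.2).card * 2 + D
      = D * D := by
  classical
  set U := (Finset.range D) ×ˢ (Finset.range D) with hU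
  set A := U.filter fun p => p.1 < p.2 with hA
  set B := U.filter fun p => p.2 < p.1 with hB
  set C := U.filter fun p => p.1 = p.2 with hC
  have hAB : A.card = B.card := by
    apply Finset.card_nbij (fun p => (p.2, p.1))
    · intro p hp
      simp only [hA, hB, hU, Finset.mem_coe, Finset.mem_filter, Finset.mem_product,
        Finset.mem_range] at hp ⊢
      tauto
    · intro p hp q hq heq
      simp only [Prod.mk.injEq] at heq
      exact Prod.ext heq.2 heq.1
    · intro p hp
      simp only [hA, hB, hU, Finset.coe_filter, Set.mem_setOf_eq, Set.mem_image,
        Finset.mem_product, Finset.mem_range] at hp ⊢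
      exact ⟨(p.2, p.1), by tauto, rfl⟩
  have hCcard : C.card = D := by
    rw [show C = (Finset.range D).image (fun i => (i,i)) by
      ext ⟨a, b⟩
      simp only [hC, hU, Finset.mem_filter, Finset.mem_product, Finset.mem_range,
        Finset.mem_image, Prod.mk.injEq]
      constructor
      · rintro ⟨⟨h1, h2⟩, h3⟩
        exact ⟨a, h1, rfl, h3⟩
      · rintro ⟨i, hi, hp1, hp2⟩
        subst hp1; subst hp2
        exact ⟨⟨hi, hi⟩, rfl⟩]
    rw [Finset.card_image_of_injective _ (fun a b h => congrArg Prod.fst h)]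
    simp
  have hdisj1 : Disjoint A B := by
    rw [Finset.disjoint_filter]
    intro p _ h1
    omega
  have hdisj2 : Disjoint (A ∪ B) C := by
    rw [Finset.disjoint_union_left]
    constructor <;> rw [Finset.disjoint_filter] <;> intro p _ h1 <;> omega
  have hunion : A ∪ B ∪ C = U := by
    ext p
    simp only [Finset.mem_union, hA, hB, hC, Finset.mem_filter]
    constructor
    · tauto
    · intro hp
      rcases Nat.lt_trichotomy p.1 p.2 with h | h | h <;> tauto
  have hUcard : U.card = D * D := by
    rw [hU, Finset.card_product]
    simp
  have := Finset.card_union_of_disjoint hdisj2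
  rw [hunion, Finset.card_union_of_disjoint hdisj1, hUcard, hCcard, hAB] at this
  omega


lemma lf_enum_aux (F : SimpleGraph V) [DecidableRel F.Adj]
    (hA : F.IsAcyclic) (hd : ∀ v : V, (F.neighborFinset v).card ≤ 2) :
    ∀ (N : ℕ) (s : Finset V), s.card ≤ N → ∀ v₀ ∈ s, (s.filter (F.Adj v₀)).card ≤ 1 →
    ∃ l : List V, l.Nodup ∧ l.toFinset = s ∧ l[0]? = some v₀ ∧ ConsecIn F s l := by
  intro N
  induction N with
  | zero =>
    intro s hsN v₀ hv₀ _
    rw [Nat.le_zero, Finset.card_eq_zero] at hsN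
    subst hsN
    exact absurd hv₀ (Finset.notMem_empty _)
  | succ N ih =>
    intro s hsN v₀ hv₀ hdeg
    have hcons_shift : ∀ (l' : List V) (t : Finset V) (u v : V), t ⊆ s →
        ConsecIn F t l' → (∀ w ∈ s, w ≠ v₀ → w ∈ t) → True := fun _ _ _ _ _ _ _ => trivial
    have hs'card : (s.erase v₀).card ≤ N := by
      have := Finset.card_erase_of_mem hv₀
      omega
    have hs'sub : ∀ w, w ∈ s.erase v₀ ↔ (w ∈ s ∧ w ≠ v₀) := by
      intro w; rw [Finset.mem_erase]; tauto
    by_cases hone : (s.filter (F.Adj v₀)).card = 1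
    · obtain ⟨v₁, hv₁⟩ := Finset.card_eq_one.mp hone
      have hv₁mem : v₁ ∈ s ∧ F.Adj v₀ v₁ := by
        have h : v₁ ∈ s.filter (F.Adj v₀) := by rw [hv₁]; simp
        simpa using Finset.mem_filter.mp h
      have hne : v₁ ≠ v₀ := by
        intro h; exact F.irrefl (h ▸ hv₁mem.2)
      have hv₁s' : v₁ ∈ s.erase v₀ := Finset.mem_erase.mpr ⟨hne, hv₁mem.1⟩
      have hdeg' : ((s.erase v₀).filter (F.Adj v₁)).card ≤ 1 := by
        have heq : (s.erase v₀).filter (F.Adj v₁) = (s.filter (F.Adj v₁)).erase v₀ := by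
          ext a; simp [Finset.mem_erase, Finset.mem_filter]; tauto
        have hv₀in : v₀ ∈ s.filter (F.Adj v₁) :=
          Finset.mem_filter.mpr ⟨hv₀, hv₁mem.2.symm⟩
        have hsub : s.filter (F.Adj v₁) ⊆ F.neighborFinset v₁ := by
          intro a ha
          simp only [Finset.mem_filter] at ha
          simpa [SimpleGraph.mem_neighborFinset] using ha.2
        have h2 := le_trans (Finset.card_le_card hsub) (hd v₁)
        rw [heq, Finset.card_erase_of_mem hv₀in]
        omega
      obtain ⟨l', hnd', htf', hhd', hcons'⟩ := ih (s.erase v₀) hs'card v₁ hv₁s' hdeg'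
      refine ⟨v₀ :: l', ?_, ?_, rfl, ?_⟩
      · rw [List.nodup_cons]
        refine ⟨fun h => ?_, hnd'⟩
        have : v₀ ∈ s.erase v₀ := htf' ▸ List.mem_toFinset.mpr h
        exact (Finset.mem_erase.mp this).1 rfl
      · rw [List.toFinset_cons, htf', Finset.insert_erase hv₀]
      · intro u v hadj hu hv
        by_cases hu0 : u = v₀
        · subst hu0
          have : v ∈ s.filter (F.Adj u) := Finset.mem_filter.mpr ⟨hv, hadj⟩
          rw [hv₁] at this
          have hveq : v = v₁ := Finset.mem_singleton.mp this
          subst hveq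
          exact ⟨0, Or.inl ⟨rfl, hhd'⟩⟩
        · by_cases hv0 : v = v₀
          · subst hv0
            have : u ∈ s.filter (F.Adj v) := Finset.mem_filter.mpr ⟨hu, hadj.symm⟩
            rw [hv₁] at this
            have hueq : u = v₁ := Finset.mem_singleton.mp this
            subst hueq
            exact ⟨0, Or.inr ⟨rfl, hhd'⟩⟩
          · obtain ⟨i, hi⟩ := hcons' u v hadj
              (Finset.mem_erase.mpr ⟨hu0, hu⟩) (Finset.mem_erase.mpr ⟨hv0, hv⟩)
            exact ⟨i + 1, by simpa using hi⟩
    · have h0 : s.filter (F.Adj v₀) = ∅ := by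
        rw [← Finset.card_eq_zero]; omega
      have hnoadj : ∀ v ∈ s, ¬ F.Adj v₀ v := by
        intro v hv hadj
        have : v ∈ s.filter (F.Adj v₀) := Finset.mem_filter.mpr ⟨hv, hadj⟩
        rw [h0] at this
        exact Finset.notMem_empty _ this
      by_cases hs' : (s.erase v₀).Nonempty
      · obtain ⟨v₁, hv₁, hd1⟩ := forest_low_degree F hA hd (s.erase v₀) hs'
        obtain ⟨l', hnd', htf', hhd', hcons'⟩ := ih (s.erase v₀) hs'card v₁ hv₁ hd1
        refine ⟨v₀ :: l', ?_, ?_, rfl, ?_⟩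
        · rw [List.nodup_cons]
          refine ⟨fun h => ?_, hnd'⟩
          have : v₀ ∈ s.erase v₀ := htf' ▸ List.mem_toFinset.mpr h
          exact (Finset.mem_erase.mp this).1 rfl
        · rw [List.toFinset_cons, htf', Finset.insert_erase hv₀]
        · intro u v hadj hu hv
          by_cases hu0 : u = v₀
          · exact absurd hadj (hu0 ▸ hnoadj v hv)
          · by_cases hv0 : v = v₀
            · exact absurd hadj.symm (hv0 ▸ hnoadj u hu)
            · obtain ⟨i, hi⟩ := hcons' u v hadj
                (Finset.mem_erase.mpr ⟨hu0, hu⟩) (Finset.mem_erase.mpr ⟨hv0, hv⟩)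
              exact ⟨i + 1, by simpa using hi⟩
      · have hseq : s = {v₀} := by
          rw [Finset.not_nonempty_iff_eq_empty] at hs'
          ext a
          constructor
          · intro ha
            by_contra hne
            have : a ∈ s.erase v₀ := Finset.mem_erase.mpr ⟨by simpa using hne, ha⟩
            rw [hs'] at this
            exact Finset.notMem_empty _ this
          · intro ha
            rw [Finset.mem_singleton] at ha
            exact ha ▸ hv₀
        refine ⟨[v₀], by simp, by simp [hseq], rfl, ?_⟩
        intro u v hadj hu hv
        rw [hseq, Finset.mem_singleton] at hu hv
        subst hu; subst hv
        exact absurd hadj (F.irrefl)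

lemma lf_list (F : SimpleGraph V) [DecidableRel F.Adj]
    (hA : F.IsAcyclic) (hd : ∀ v : V, (F.neighborFinset v).card ≤ 2) :
    ∃ l : List V, l.Nodup ∧ l.toFinset = Finset.univ ∧ ConsecIn F Finset.univ l := by
  by_cases hne : (Finset.univ : Finset V).Nonempty
  · obtain ⟨v₀, hv₀, hdeg⟩ := forest_low_degree F hA hd Finset.univ hne
    obtain ⟨l, h1, h2, _, h4⟩ :=
      lf_enum_aux F hA hd Finset.univ.card Finset.univ le_rfl v₀ hv₀ hdeg
    exact ⟨l, h1, h2, h4⟩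
  · refine ⟨[], by simp, ?_, ?_⟩
    · rw [Finset.not_nonempty_iff_eq_empty] at hne
      simp [hne]
    · intro u v _ hu _
      exact absurd hu (by rw [Finset.not_nonempty_iff_eq_empty] at hne; simp [hne])


lemma stair (G : SimpleGraph V) [DecidableRel G.Adj] :
    ∀ (N x : ℕ) (S T : Finset V), S.card + T.card ≤ N →
    x ≤ S.card + 1 → x ≤ T.card + 1 →
    ((S ×ˢ T).filter fun p => G.Adj p.1 p.2).card + x ≤ S.card + T.card →
    ∃ lS lT : List V, lS.Nodup ∧ lT.Nodup ∧ lS.toFinset = S ∧ lT.toFinset = T ∧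
      ∀ u v : V, u ∈ S → v ∈ T → G.Adj u v →
        x + lT.idxOf v ≤ lS.idxOf u + T.card := by
  intro N
  induction N with
  | zero =>
    intro x S T hN hx1 hx2 hm
    have hS0 : S.card = 0 := by omega
    have hT0 : T.card = 0 := by omega
    rw [Finset.card_eq_zero] at hS0 hT0
    subst hS0; subst hT0
    exact ⟨[], [], by simp, by simp, by simp, by simp, fun u v hu _ _ => absurd hu (by simp)⟩
  | succ N ih =>
    intro x S T hN hx1 hx2 hm
    have hTlen : (T.toList).length = T.card := Finset.length_toList T
    by_cases hx : x ≤ 1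
    · refine ⟨S.toList, T.toList, Finset.nodup_toList S, Finset.nodup_toList T,
        by simp, by simp, ?_⟩
      intro u v hu hv hadj
      have h1 : T.toList.idxOf v < T.card := by
        rw [← hTlen]
        exact List.idxOf_lt_length_iff.mpr (Finset.mem_toList.mpr hv)
      omega
    · by_cases hm0 : ((S ×ˢ T).filter fun p => G.Adj p.1 p.2).card = 0
      · refine ⟨S.toList, T.toList, Finset.nodup_toList S, Finset.nodup_toList T,
          by simp, by simp, ?_⟩
        intro u v hu hv hadj
        exfalso
        rw [Finset.card_eq_zero] at hm0
        have : (u, v) ∈ (S ×ˢ T).filter fun p => G.Adj p.1 p.2 :=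
          Finset.mem_filter.mpr ⟨Finset.mem_product.mpr ⟨hu, hv⟩, hadj⟩
        rw [hm0] at this
        exact Finset.notMem_empty _ this
      · -- there is an adjacent pair
        obtain ⟨⟨u, v⟩, hp⟩ := Finset.card_pos.mp (Nat.pos_of_ne_zero hm0)
        rw [Finset.mem_filter, Finset.mem_product] at hp
        obtain ⟨⟨huS, hvT⟩, hadjuv⟩ := hp
        by_cases hS : x ≤ S.card
        · -- remove u from S, append it at the end of lS
          have hcardS : 1 ≤ S.card := Finset.card_pos.mpr ⟨u, huS⟩
          have herase : (S.erase u).card = S.card - 1 := Finset.card_erase_of_mem huS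
          have hsub : ((S.erase u ×ˢ T).filter fun p => G.Adj p.1 p.2) ⊆
              ((S ×ˢ T).filter fun p => G.Adj p.1 p.2) :=
            Finset.filter_subset_filter _
              (Finset.product_subset_product_left (Finset.erase_subset _ _))
          have hlt : ((S.erase u ×ˢ T).filter fun p => G.Adj p.1 p.2).card <
              ((S ×ˢ T).filter fun p => G.Adj p.1 p.2).card := by
            apply Finset.card_lt_card
            rw [Finset.ssubset_iff_of_subset hsub]
            refine ⟨(u, v), Finset.mem_filter.mpr
              ⟨Finset.mem_product.mpr ⟨huS, hvT⟩, hadjuv⟩, ?_⟩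
            intro hcontra
            rw [Finset.mem_filter, Finset.mem_product] at hcontra
            exact (Finset.notMem_erase u S) hcontra.1.1
          obtain ⟨lS', lT, hnd1, hnd2, htf1, htf2, hprop⟩ :=
            ih x (S.erase u) T (by omega) (by omega) hx2 (by omega)
          have hunotin : u ∉ lS' := by
            intro hcontra
            have : u ∈ S.erase u := htf1 ▸ List.mem_toFinset.mpr hcontra
            exact (Finset.notMem_erase u S) this
          have hlS'len : lS'.length = S.card - 1 := by
            rw [← herase, ← htf1, List.toFinset_card_of_nodup hnd1]
          refine ⟨lS' ++ [u], lT, ?_, hnd2, ?_, htf2, ?_⟩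
          · rw [List.nodup_append']
            exact ⟨hnd1, List.nodup_singleton _, by
              intro a ha hb
              rw [List.mem_singleton] at hb
              subst hb
              exact hunotin ha⟩
          · rw [List.toFinset_append, htf1]
            simp only [List.toFinset_cons, List.toFinset_nil, insert_empty_eq]
            rw [Finset.union_comm]
            have : ({u} : Finset V) ∪ S.erase u = insert u (S.erase u) := by
              ext a; simp [or_comm]
            rw [this, Finset.insert_erase huS]
          · intro u' v' hu' hv' hadj'
            by_cases heq : u' = u
            · subst heq
              rw [List.idxOf_append_of_notMem hunotin, List.idxOf_cons_self]
              have hmemlT : v' ∈ lT := by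
                rw [← List.mem_toFinset, htf2]; exact hv'
              have h1 : lT.idxOf v' < lT.length := List.idxOf_lt_length_iff.mpr hmemlT
              have h2 : lT.length = T.card := by
                rw [← htf2, List.toFinset_card_of_nodup hnd2]
              omega
            · have hu'e : u' ∈ S.erase u := Finset.mem_erase.mpr ⟨heq, hu'⟩
              have hu'mem : u' ∈ lS' := by
                rw [← List.mem_toFinset, htf1]; exact hu'e
              rw [List.idxOf_append_of_mem hu'mem]
              exact hprop u' v' hu'e hv' hadj'
        · by_cases hT : x ≤ T.card
          · -- remove v from T, put it at the head of lT
            have hcardT : 1 ≤ T.card := Finset.card_pos.mpr ⟨v, hvT⟩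
            have herase : (T.erase v).card = T.card - 1 := Finset.card_erase_of_mem hvT
            have hsub : ((S ×ˢ T.erase v).filter fun p => G.Adj p.1 p.2) ⊆
                ((S ×ˢ T).filter fun p => G.Adj p.1 p.2) :=
              Finset.filter_subset_filter _
                (Finset.product_subset_product_right (Finset.erase_subset _ _))
            have hlt : ((S ×ˢ T.erase v).filter fun p => G.Adj p.1 p.2).card <
                ((S ×ˢ T).filter fun p => G.Adj p.1 p.2).card := by
              apply Finset.card_lt_card
              rw [Finset.ssubset_iff_of_subset hsub]
              refine ⟨(u, v), Finset.mem_filter.mpr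
                ⟨Finset.mem_product.mpr ⟨huS, hvT⟩, hadjuv⟩, ?_⟩
              intro hcontra
              rw [Finset.mem_filter, Finset.mem_product] at hcontra
              exact (Finset.notMem_erase v T) hcontra.1.2
            obtain ⟨lS, lT', hnd1, hnd2, htf1, htf2, hprop⟩ :=
              ih x S (T.erase v) (by omega) hx1 (by omega) (by omega)
            have hvnotin : v ∉ lT' := by
              intro hcontra
              have : v ∈ T.erase v := htf2 ▸ List.mem_toFinset.mpr hcontra
              exact (Finset.notMem_erase v T) this
            refine ⟨lS, v :: lT', hnd1, ?_, htf1, ?_, ?_⟩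
            · rw [List.nodup_cons]; exact ⟨hvnotin, hnd2⟩
            · rw [List.toFinset_cons, htf2, Finset.insert_erase hvT]
            · intro u' v' hu' hv' hadj'
              by_cases heq : v' = v
              · subst heq
                rw [List.idxOf_cons_self]
                omega
              · have hv'e : v' ∈ T.erase v := Finset.mem_erase.mpr ⟨heq, hv'⟩
                rw [List.idxOf_cons_ne _ (fun h => heq h.symm)]
                have := hprop u' v' hu' hv'e hadj'
                rw [herase] at this
                omega
          · -- S.card = T.card = x - 1, find an isolated vertex in S
            have hScard : S.card = x - 1 := by omega
            have hTcard : T.card = x - 1 := by omega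
            have hmle : ((S ×ˢ T).filter fun p => G.Adj p.1 p.2).card ≤ x - 2 := by omega
            have hiso : ∃ u₀ ∈ S, ∀ v' ∈ T, ¬ G.Adj u₀ v' := by
              by_contra hcontra
              push_neg at hcontra
              have hch : ∀ w : V, ∃ z : V, w ∈ S → (z ∈ T ∧ G.Adj w z) := by
                intro w
                by_cases hw : w ∈ S
                · obtain ⟨z, hz1, hz2⟩ := hcontra w hw
                  exact ⟨z, fun _ => ⟨hz1, hz2⟩⟩
                · exact ⟨w, fun h => absurd h hw⟩
              choose g hg using hch
              have : S.card ≤ ((S ×ˢ T).filter fun p => G.Adj p.1 p.2).card := by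
                apply Finset.card_le_card_of_injOn (fun w => (w, g w))
                · intro w hw
                  exact Finset.mem_filter.mpr
                    ⟨Finset.mem_product.mpr ⟨hw, (hg w hw).1⟩, (hg w hw).2⟩
                · intro a _ b _ hab
                  exact congrArg Prod.fst hab
              omega
            obtain ⟨u₀, hu₀S, hu₀iso⟩ := hiso
            have hsub : ((S.erase u₀ ×ˢ T).filter fun p => G.Adj p.1 p.2) ⊆
                ((S ×ˢ T).filter fun p => G.Adj p.1 p.2) :=
              Finset.filter_subset_filter _
                (Finset.product_subset_product_left (Finset.erase_subset _ _))
            have herase : (S.erase u₀).card = S.card - 1 := Finset.card_erase_of_mem hu₀S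
            obtain ⟨lS', lT, hnd1, hnd2, htf1, htf2, hprop⟩ :=
              ih (x - 1) (S.erase u₀) T (by omega) (by omega) (by omega)
                (by have := Finset.card_le_card hsub; omega)
            have hu₀notin : u₀ ∉ lS' := by
              intro hcontra
              have : u₀ ∈ S.erase u₀ := htf1 ▸ List.mem_toFinset.mpr hcontra
              exact (Finset.notMem_erase u₀ S) this
            refine ⟨u₀ :: lS', lT, ?_, hnd2, ?_, htf2, ?_⟩
            · rw [List.nodup_cons]; exact ⟨hu₀notin, hnd1⟩
            · rw [List.toFinset_cons, htf1, Finset.insert_erase hu₀S]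
            · intro u' v' hu' hv' hadj'
              by_cases heq : u' = u₀
              · subst heq
                exact absurd hadj' (hu₀iso v' hv')
              · have hu'e : u' ∈ S.erase u₀ := Finset.mem_erase.mpr ⟨heq, hu'⟩
                rw [List.idxOf_cons_ne _ (fun h => heq h.symm)]
                have := hprop u' v' hu'e hv' hadj'
                omega


lemma ceil_arith (k n : ℕ) (hk : 2 ≤ k) :
    ⌈(2 * ((k : ℚ) - 1) * (n : ℚ)) / (2 * (k : ℚ) - 1)⌉₊ = n - n / (2 * k - 1) := by
  have hD3 : 3 ≤ 2 * k - 1 := by omega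
  set D := 2 * k - 1 with hDdef
  have hDpos : 0 < D := by omega
  set e := n / D with hedef
  have hdm : D * e + n % D = n := Nat.div_add_mod n D
  have hmod : n % D < D := Nat.mod_lt n hDpos
  have hcastD : (2 * (k : ℚ) - 1) = (D : ℚ) := by
    rw [hDdef, Nat.cast_sub (by omega : 1 ≤ 2 * k)]
    push_cast
    ring
  have hcastnum : 2 * ((k : ℚ) - 1) * (n : ℚ) = (((D - 1) * n : ℕ) : ℚ) := by
    rw [Nat.cast_mul, Nat.cast_sub (by omega : 1 ≤ D), hDdef,
      Nat.cast_sub (by omega : 1 ≤ 2 * k)]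
    push_cast
    ring
  rw [hcastnum, hcastD]
  rcases Nat.eq_zero_or_pos n with hn | hn
  · subst hn
    simp
  · have heln : e < n := by
      rw [hedef]
      exact Nat.div_lt_self hn (by omega)
    have hT0 : n - e ≠ 0 := by omega
    rw [Nat.ceil_eq_iff hT0]
    have hDQ : (0 : ℚ) < (D : ℚ) := by positivity
    constructor
    · rw [lt_div_iff₀ hDQ]
      have hnat : (n - e - 1) * D < (D - 1) * n := by
        zify [hmod.le, heln.le, hDpos, show 1 ≤ n - e by omega, show 1 ≤ D by omega]
        nlinarith [hdm, hmod]
      calc ((n - e - 1 : ℕ) : ℚ) * D = (((n - e - 1) * D : ℕ) : ℚ) := by push_cast; ring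
        _ < (((D - 1) * n : ℕ) : ℚ) := by exact_mod_cast hnat
    · rw [div_le_iff₀ hDQ]
      have hnat : (D - 1) * n ≤ (n - e) * D := by
        have he1 : e * D ≤ n := by
          rw [hedef]
          exact Nat.div_mul_le_self n D
        zify [heln.le, show 1 ≤ D by omega]
        nlinarith [he1, heln.le]
      calc (((D - 1) * n : ℕ) : ℚ) ≤ (((n - e) * D : ℕ) : ℚ) := by exact_mod_cast hnat
        _ = ((n - e : ℕ) : ℚ) * D := by push_cast; ring


end Aux

/-- For every `k ≥ 2`, every simple graph on `n` vertices with linear arboricity at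
most `k` has bandwidth at most `⌈2(k−1)n/(2k−1)⌉`. -/
theorem bandwidth_of_linear_arboricity (k : ℕ) (hk : 2 ≤ k)
    (V : Type) [Fintype V] (G : SimpleGraph V) (hG : LinearArboricityLE G k) :
    BandwidthLE G ⌈(2 * ((k : ℚ) - 1) * (Fintype.card V : ℚ)) / (2 * k - 1)⌉₊ := by
  classical
  obtain ⟨F, hF, hFE⟩ := hG
  unfold BandwidthLE
  rw [ceil_arith k (Fintype.card V) hk]
  set n := Fintype.card V with hndef
  set D := 2 * k - 1 with hDdef
  set x := n / D with hxdef
  have hD3 : 3 ≤ D := by omega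
  have hxn : x ≤ n := Nat.div_le_self n D
  by_cases hxle : x ≤ 1
  · refine ⟨Fintype.equivFin V, ?_⟩
    intro u v hadj
    have hu : ((Fintype.equivFin V) u : ℕ) < n := ((Fintype.equivFin V) u).isLt
    have hv : ((Fintype.equivFin V) v : ℕ) < n := ((Fintype.equivFin V) v).isLt
    rw [abs_le]
    constructor <;> [skip; skip] <;> omega
  · push_neg at hxle
    have hx2 : 2 ≤ x := hxle
    set r := n % D with hrdef
    have hdm : D * x + r = n := Nat.div_add_mod n D
    have hrD : r < D := Nat.mod_lt n (by omega)
    have hxpos : 0 < x := by omega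
    set b := k - 1 with hbdef
    have hb1 : 1 ≤ b := by omega
    have hDb : D = 2 * b + 1 := by omega
    have hdegF : ∀ i : Fin k, ∀ v : V, ((F i).neighborFinset v).card ≤ 2 := by
      intro i v
      have h := (hF i).2 v
      have h2 : ((F i).neighborSet v).ncard = ((F i).neighborFinset v).card := by
        rw [SimpleGraph.neighborFinset_def]
        exact Set.ncard_eq_toFinset_card' _
      omega
    have hlists : ∀ i : Fin k, ∃ l : List V, l.Nodup ∧ l.toFinset = Finset.univ ∧
        ConsecIn (F i) Finset.univ l := fun i => lf_list (F i) (hF i).1 (hdegF i)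
    choose L hLnd hLtf hLcons using hlists
    have hLlen : ∀ i, (L i).length = n := by
      intro i
      rw [← List.toFinset_card_of_nodup (hLnd i), hLtf i]
      exact Finset.card_univ
    have hk0 : 0 < k := by omega
    set i0 : Fin k := ⟨0, hk0⟩ with hi0def
    set l₀ := L i0 with hl0def
    have hl₀mem : ∀ v : V, v ∈ l₀ := by
      intro v
      rw [← List.mem_toFinset, hLtf i0]
      exact Finset.mem_univ v
    have hl₀len : l₀.length = n := hLlen i0
    set bl : ℕ → ℕ := fun i => min (i / x) (D - 1) with hbldef
    have hblmono : Monotone bl := by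
      intro i j hij
      exact min_le_min (Nat.div_le_div_right hij) le_rfl
    have hblbd : ∀ i, bl i ≤ D - 1 := fun i => min_le_right _ _
    set blv : V → ℕ := fun v => bl (l₀.idxOf v) with hblvdef
    set crossG := G.edgeFinset.filter (fun e => ¬ (Sym2.map blv e).IsDiag) with hcrossdef
    have hcross_bound : crossG.card ≤ (D - 1) + b * (n - 1) := by
      have hsub : crossG ⊆ Finset.univ.biUnion
          (fun i : Fin k => (F i).edgeFinset.filter (fun e => ¬ (Sym2.map blv e).IsDiag)) := by
        intro e he
        rw [hcrossdef, Finset.mem_filter] at he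
        obtain ⟨heG, hecross⟩ := he
        rw [SimpleGraph.mem_edgeFinset, hFE, Set.mem_iUnion] at heG
        obtain ⟨i, hi⟩ := heG
        exact Finset.mem_biUnion.mpr ⟨i, Finset.mem_univ i,
          Finset.mem_filter.mpr ⟨SimpleGraph.mem_edgeFinset.mpr hi, hecross⟩⟩
      have h1 := Finset.card_le_card hsub
      have h2 := Finset.card_biUnion_le (s := (Finset.univ : Finset (Fin k)))
        (t := fun i => (F i).edgeFinset.filter (fun e => ¬ (Sym2.map blv e).IsDiag))
      have h3 : ((F i0).edgeFinset.filter (fun e => ¬ (Sym2.map blv e).IsDiag)).card ≤ D - 1 := by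
        have hfc := forest_cross_card (F i0) l₀ (hLnd i0) (hLcons i0) bl hblmono (D-1) hblbd
        rw [← hblvdef] at hfc
        exact hfc
      have h4 : ∀ i, ((F i).edgeFinset.filter (fun e => ¬ (Sym2.map blv e).IsDiag)).card ≤ n - 1 := by
        intro i
        refine le_trans (Finset.card_le_card (Finset.filter_subset _ _)) ?_
        have hfe := forest_edge_card (F i) (L i) (hLcons i)
        rwa [hLlen i] at hfe
      have h7 : (Finset.univ.erase i0).card = b := by
        rw [Finset.card_erase_of_mem (Finset.mem_univ i0)]
        simp [hbdef]
      have htot : ∑ i : Fin k,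
          ((F i).edgeFinset.filter (fun e => ¬ (Sym2.map blv e).IsDiag)).card
          ≤ (D - 1) + b * (n - 1) := by
        rw [← Finset.add_sum_erase Finset.univ _ (Finset.mem_univ i0)]
        have h6 := Finset.sum_le_card_nsmul (Finset.univ.erase i0)
          (fun i => ((F i).edgeFinset.filter (fun e => ¬ (Sym2.map blv e).IsDiag)).card)
          (n - 1) (fun i _ => h4 i)
        rw [h7, smul_eq_mul] at h6
        have := h3
        omega
      exact le_trans (le_trans h1 h2) htot
    -- pigeonhole over pairs of blocks
    set P := ((Finset.range D) ×ˢ (Finset.range D)).filter (fun p => p.1 < p.2) with hPdef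
    have hPcard : P.card * 2 + D = D * D := pairs_card D
    have hgood : ∃ p ∈ P, (crossG.filter (fun e => Sym2.map blv e = s(p.1, p.2))).card
        ≤ x + (if p.2 = D - 1 then r else 0) := by
      by_contra hcon
      push_neg at hcon
      have hdisj : ∀ p ∈ P, ∀ q ∈ P, p ≠ q →
          Disjoint (crossG.filter (fun e => Sym2.map blv e = s(p.1, p.2)))
            (crossG.filter (fun e => Sym2.map blv e = s(q.1, q.2))) := by
        intro p hp q hq hpq
        rw [Finset.disjoint_left]
        intro e hep heq
        rw [Finset.mem_filter] at hep heq
        have hss : s(p.1, p.2) = s(q.1, q.2) := by rw [← hep.2, heq.2]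
        rw [Sym2.eq_iff] at hss
        rw [hPdef, Finset.mem_filter] at hp hq
        apply hpq
        rcases hss with ⟨ha, hb⟩ | ⟨ha, hb⟩
        · exact Prod.ext ha hb
        · exfalso
          have h1 := hp.2
          have h2 := hq.2
          omega
      have hsum1 : ∑ p ∈ P, (crossG.filter (fun e => Sym2.map blv e = s(p.1, p.2))).card
          = (P.biUnion (fun p => crossG.filter (fun e => Sym2.map blv e = s(p.1, p.2)))).card :=
        (Finset.card_biUnion hdisj).symm
      have hsum2 : (P.biUnion (fun p => crossG.filter
          (fun e => Sym2.map blv e = s(p.1, p.2)))).card ≤ crossG.card :=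
        Finset.card_le_card (Finset.biUnion_subset.mpr (fun p _ => Finset.filter_subset _ _))
      have hsum3 : ∑ p ∈ P, (x + (if p.2 = D - 1 then r else 0) + 1)
          ≤ ∑ p ∈ P, (crossG.filter (fun e => Sym2.map blv e = s(p.1, p.2))).card := by
        apply Finset.sum_le_sum
        intro p hp
        have := hcon p hp
        omega
      have hsplit : ∑ p ∈ P, (x + (if p.2 = D - 1 then r else 0) + 1)
          = (x + 1) * P.card + r * (P.filter (fun p => p.2 = D - 1)).card := by
        have hcongr : ∀ p ∈ P, x + (if p.2 = D - 1 then r else 0) + 1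
            = (x + 1) + (if p.2 = D - 1 then r else 0) := fun p _ => by omega
        rw [Finset.sum_congr rfl hcongr, Finset.sum_add_distrib, Finset.sum_const,
          smul_eq_mul]
        congr 1
        · rw [mul_comm]
        · rw [← Finset.sum_filter, Finset.sum_const, smul_eq_mul, mul_comm]
      have hplast : (P.filter (fun p => p.2 = D - 1)).card = D - 1 := by
        have himg : P.filter (fun p => p.2 = D - 1)
            = (Finset.range (D-1)).image (fun s => (s, D-1)) := by
          ext ⟨a, c⟩
          simp only [hPdef, Finset.mem_filter, Finset.mem_product, Finset.mem_range,
            Finset.mem_image, Prod.mk.injEq]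
          constructor
          · rintro ⟨⟨⟨ha, hc⟩, hac⟩, hceq⟩
            exact ⟨a, by omega, rfl, hceq.symm⟩
          · rintro ⟨s, hs, hsa, hceq⟩
            subst hsa
            subst hceq
            omega
        rw [himg, Finset.card_image_of_injective _ (fun a c h => congrArg Prod.fst h),
          Finset.card_range]
      have hchain : (x + 1) * P.card + r * (D - 1) ≤ (D - 1) + b * (n - 1) := by
        rw [hsplit, hplast] at hsum3
        have := le_trans hsum3 (le_trans (le_of_eq hsum1) hsum2)
        exact le_trans this hcross_bound
      -- final arithmetic contradiction
      have hPc : P.card = D * b := by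
        have hA : D * (D - 1) = D * D - D := by
          zify [show 1 ≤ D by omega, show D ≤ D * D from Nat.le_mul_of_pos_right D (by omega)]
          ring
        have hDb1 : D - 1 = 2 * b := by omega
        have hA2 : D * (2 * b) = 2 * (D * b) := by ring
        rw [hDb1, hA2] at hA
        have hDDD : D ≤ D * D := Nat.le_mul_of_pos_right D (by omega)
        omega
      rw [hPc] at hchain
      have hf1 : D ≤ D * b := Nat.le_mul_of_pos_right D (by omega)
      have hexp1 : (x + 1) * (D * b) = x * (D * b) + D * b := by ring
      have hexp2 : b * (n - 1) + b = b * n := by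
        have hn1 : 1 ≤ n := by omega
        zify [hn1]
        ring
      have hbn : b * n = x * (D * b) + b * r := by
        rw [← hdm]
        ring
      have hrD1 : r * (D - 1) = r * D - r := by
        zify [show 1 ≤ D by omega, show r ≤ r * D from Nat.le_mul_of_pos_right r (by omega)]
        ring
      have hrDge : b * r + r ≤ r * D := by
        have : r * D = 2 * (b * r) + r := by rw [hDb]; ring
        omega
      omega
    obtain ⟨⟨a, c⟩, hpP, hWcap⟩ := hgood
    rw [hPdef, Finset.mem_filter, Finset.mem_product] at hpP
    obtain ⟨⟨haD, hcD⟩, hac⟩ := hpP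
    rw [Finset.mem_range] at haD hcD
    -- block sizes
    have hDx3 : 3 * x ≤ D * x := Nat.mul_le_mul_right x hD3
    have hblock : ∀ j, j < D → (Finset.univ.filter (fun v : V => blv v = j)).card
        = if j = D - 1 then x + r else x := by
      intro j hj
      have hbij : (Finset.univ.filter (fun v : V => blv v = j)).card
          = ((Finset.range n).filter (fun i => bl i = j)).card := by
        apply Finset.card_nbij (fun v => l₀.idxOf v)
        · intro v hv
          rw [Finset.mem_coe, Finset.mem_filter] at hv
          rw [Finset.mem_coe, Finset.mem_filter, Finset.mem_range]
          have hlt := List.idxOf_lt_length_iff.mpr (hl₀mem v)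
          rw [hl₀len] at hlt
          exact ⟨hlt, hv.2⟩
        · intro v _ w _ heq
          exact (List.idxOf_inj (hl₀mem v)).mp heq
        · intro i hi
          rw [Finset.coe_filter, Set.mem_setOf_eq, Finset.mem_range] at hi
          have hilt : i < l₀.length := by rw [hl₀len]; exact hi.1
          refine ⟨l₀.get ⟨i, hilt⟩, ?_, ?_⟩
          · rw [Finset.coe_filter, Set.mem_setOf_eq]
            have hidx : l₀.idxOf (l₀.get ⟨i, hilt⟩) = i := by
              have := List.Nodup.idxOf_getElem (hLnd i0) i hilt
              simpa [List.get_eq_getElem] using this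
            refine ⟨Finset.mem_univ _, ?_⟩
            rw [hblvdef]
            simp only []
            rw [hidx]
            exact hi.2
          · have := List.Nodup.idxOf_getElem (hLnd i0) i hilt
            simpa [List.get_eq_getElem] using this
      rw [hbij]
      by_cases hjD : j = D - 1
      · rw [if_pos hjD]
        have hset : (Finset.range n).filter (fun i => bl i = j) = Finset.Ico ((D-1)*x) n := by
          ext i
          simp only [Finset.mem_filter, Finset.mem_range, Finset.mem_Ico]
          constructor
          · rintro ⟨hin, hbl⟩
            refine ⟨?_, hin⟩
            rw [hbldef] at hbl
            simp only [] at hbl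
            have hge : D - 1 ≤ i / x := by
              rcases min_cases (i / x) (D - 1) with ⟨heq, hle⟩ | ⟨heq, hle⟩
              · rw [heq] at hbl; omega
              · rw [heq] at hbl; omega
            exact (Nat.le_div_iff_mul_le hxpos).mp hge
          · rintro ⟨hge, hin⟩
            refine ⟨hin, ?_⟩
            rw [hbldef]
            simp only []
            have : D - 1 ≤ i / x := (Nat.le_div_iff_mul_le hxpos).mpr hge
            rw [hjD]
            exact min_eq_right this
        rw [hset, Nat.card_Ico]
        have hsx : (D - 1) * x = D * x - x := Nat.sub_one_mul D x
        have hxDx : x ≤ D * x := Nat.le_mul_of_pos_left x (by omega)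
        omega
      · rw [if_neg hjD]
        have hjlt : j < D - 1 := by omega
        have hset : (Finset.range n).filter (fun i => bl i = j)
            = Finset.Ico (j*x) (j*x + x) := by
          ext i
          simp only [Finset.mem_filter, Finset.mem_range, Finset.mem_Ico]
          constructor
          · rintro ⟨hin, hbl⟩
            rw [hbldef] at hbl
            simp only [] at hbl
            have hdiv : i / x = j := by
              rcases min_cases (i / x) (D - 1) with ⟨heq, hle⟩ | ⟨heq, hle⟩
              · rw [heq] at hbl; exact hbl
              · rw [heq] at hbl; omega
            constructor
            · rw [← hdiv]
              exact Nat.div_mul_le_self i x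
            · have : i / x < j + 1 := by omega
              have := (Nat.div_lt_iff_lt_mul hxpos).mp this
              have hsm : (j + 1) * x = j * x + x := by ring
              omega
          · rintro ⟨h1, h2⟩
            have hdiv : i / x = j := by
              have hle : j ≤ i / x := (Nat.le_div_iff_mul_le hxpos).mpr h1
              have hlt : i / x < j + 1 := by
                rw [Nat.div_lt_iff_lt_mul hxpos]
                have hsm : (j + 1) * x = j * x + x := by ring
                omega
              omega
            have hjx : (j + 1) * x ≤ (D - 1) * x := Nat.mul_le_mul_right x (by omega)
            have hDx : (D - 1) * x ≤ D * x := Nat.mul_le_mul_right x (by omega)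
            have hsm : (j + 1) * x = j * x + x := by ring
            refine ⟨by omega, ?_⟩
            rw [hbldef]
            simp only []
            rw [hdiv]
            exact min_eq_left (by omega)
        rw [hset, Nat.card_Ico]
        omega
    set S := Finset.univ.filter (fun v : V => blv v = a) with hSdef
    set T := Finset.univ.filter (fun v : V => blv v = c) with hTdef
    have hScard : S.card = x := by
      rw [hSdef, hblock a (by omega), if_neg (by omega)]
    have hTcard : T.card = x + (if c = D - 1 then r else 0) := by
      rw [hTdef, hblock c (by omega)]
      by_cases h : c = D - 1 <;> simp [h]
    have hST : Disjoint S T := by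
      rw [Finset.disjoint_left]
      intro v hvS hvT
      rw [hSdef, Finset.mem_filter] at hvS
      rw [hTdef, Finset.mem_filter] at hvT
      omega
    have hmcap : ((S ×ˢ T).filter (fun p => G.Adj p.1 p.2)).card
        ≤ x + (if c = D - 1 then r else 0) := by
      refine le_trans ?_ hWcap
      apply Finset.card_le_card_of_injOn (fun p => s(p.1, p.2))
      · rintro ⟨u, v⟩ hp
        rw [Finset.mem_coe, Finset.mem_filter, Finset.mem_product] at hp
        obtain ⟨⟨huS, hvT⟩, hadj⟩ := hp
        rw [hSdef, Finset.mem_filter] at huS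
        rw [hTdef, Finset.mem_filter] at hvT
        have hmap : Sym2.map blv s(u, v) = s(a, c) := by
          rw [Sym2.map_pair_eq, huS.2, hvT.2]
        rw [Finset.mem_coe, Finset.mem_filter]
        refine ⟨?_, hmap⟩
        rw [hcrossdef, Finset.mem_filter]
        refine ⟨SimpleGraph.mem_edgeFinset.mpr hadj, ?_⟩
        rw [hmap, Sym2.mk_isDiag_iff]
        omega
      · rintro ⟨u, v⟩ hp ⟨u2, v2⟩ hp2 heq
        simp only [Finset.coe_filter, Set.mem_setOf_eq, Finset.mem_product] at hp hp2
        rw [Sym2.eq_iff] at heq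
        rcases heq with ⟨h1, h2⟩ | ⟨h1, h2⟩
        · exact Prod.ext h1 h2
        · exfalso
          have huS := hp.1.1
          have hv2T := hp2.1.2
          rw [hSdef, Finset.mem_filter] at huS
          rw [hTdef, Finset.mem_filter] at hv2T
          have h1' : u = v2 := h1
          rw [← h1'] at hv2T
          omega
    obtain ⟨lS, lT, hndS, hndT, htfS, htfT, hstp⟩ :=
      stair G (S.card + T.card) x S T le_rfl (by omega) (by omega) (by omega)
    set mid := (Finset.univ \ (S ∪ T)).toList with hmiddef
    set LL := lS ++ (mid ++ lT) with hLLdef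
    have hlSlen : lS.length = x := by
      rw [← List.toFinset_card_of_nodup hndS, htfS, hScard]
    have hlTlen : lT.length = T.card := by
      rw [← List.toFinset_card_of_nodup hndT, htfT]
    have hmemS_list : ∀ u : V, u ∈ lS ↔ u ∈ S := fun u => by
      rw [← List.mem_toFinset, htfS]
    have hmemT_list : ∀ u : V, u ∈ lT ↔ u ∈ T := fun u => by
      rw [← List.mem_toFinset, htfT]
    have hmemM_list : ∀ u : V, u ∈ mid ↔ (u ∉ S ∧ u ∉ T) := fun u => by
      rw [hmiddef, Finset.mem_toList, Finset.mem_sdiff, Finset.mem_union]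
      simp only [Finset.mem_univ, true_and]
      tauto
    have hmidnd : mid.Nodup := Finset.nodup_toList _
    have hSTn : S.card + T.card ≤ n := by
      have h1 := Finset.card_le_card (Finset.subset_univ (S ∪ T))
      rw [Finset.card_union_of_disjoint hST, Finset.card_univ] at h1
      exact h1
    have hmidlen : mid.length = n - (S.card + T.card) := by
      rw [hmiddef, Finset.length_toList, Finset.card_sdiff_of_subset (Finset.subset_univ _),
        Finset.card_union_of_disjoint hST, Finset.card_univ]
    have hLLnd : LL.Nodup := by
      rw [hLLdef, List.nodup_append', List.nodup_append']
      refine ⟨hndS, ⟨hmidnd, hndT, ?_⟩, ?_⟩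
      · intro w hw hw2
        exact ((hmemM_list w).mp hw).2 ((hmemT_list w).mp hw2)
      · intro u hu hu2
        have huS := (hmemS_list u).mp hu
        rcases List.mem_append.mp hu2 with h | h
        · exact ((hmemM_list u).mp h).1 huS
        · exact (Finset.disjoint_left.mp hST huS) ((hmemT_list u).mp h)
    have hLLmem : ∀ v : V, v ∈ LL := by
      intro v
      rw [hLLdef, List.mem_append, List.mem_append]
      by_cases h1 : v ∈ S
      · exact Or.inl ((hmemS_list v).mpr h1)
      · by_cases h2 : v ∈ T
        · exact Or.inr (Or.inr ((hmemT_list v).mpr h2))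
        · exact Or.inr (Or.inl ((hmemM_list v).mpr ⟨h1, h2⟩))
    have hLLlen : LL.length = n := by
      rw [hLLdef]
      simp only [List.length_append]
      rw [hlSlen, hmidlen, hlTlen]
      omega
    have hidxS : ∀ u ∈ S, LL.idxOf u = lS.idxOf u ∧ lS.idxOf u < x := by
      intro u hu
      have hmem := (hmemS_list u).mpr hu
      constructor
      · rw [hLLdef]
        exact List.idxOf_append_of_mem hmem
      · have := List.idxOf_lt_length_iff.mpr hmem
        omega
    have hidxM : ∀ w : V, w ∉ S → w ∉ T →
        (x ≤ LL.idxOf w ∧ LL.idxOf w < x + mid.length) := by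
      intro w hwS hwT
      have hwm : w ∈ mid := (hmemM_list w).mpr ⟨hwS, hwT⟩
      have hwnS : w ∉ lS := fun h => hwS ((hmemS_list w).mp h)
      rw [hLLdef, List.idxOf_append_of_notMem hwnS, List.idxOf_append_of_mem hwm,
        hlSlen]
      have := List.idxOf_lt_length_iff.mpr hwm
      omega
    have hidxT : ∀ v ∈ T, LL.idxOf v = x + (mid.length + lT.idxOf v)
        ∧ lT.idxOf v < T.card := by
      intro v hv
      have hvnS : v ∉ lS := fun h => (Finset.disjoint_left.mp hST ((hmemS_list v).mp h)) hv
      have hvnM : v ∉ mid := fun h => ((hmemM_list v).mp h).2 hv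
      have hvT : v ∈ lT := (hmemT_list v).mpr hv
      constructor
      · rw [hLLdef, List.idxOf_append_of_notMem hvnS, List.idxOf_append_of_notMem hvnM,
          hlSlen]
      · have := List.idxOf_lt_length_iff.mpr hvT
        omega
    have hLLidxlt : ∀ v : V, LL.idxOf v < n := by
      intro v
      rw [← hLLlen]
      exact List.idxOf_lt_length_iff.mpr (hLLmem v)
    have hTx : x ≤ T.card := by
      rw [hTcard]
      omega
    have hkey : ∀ u w : V, G.Adj u w → LL.idxOf w ≤ LL.idxOf u + (n - x) := by
      intro u w hadj
      by_contra hgt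
      push_neg at hgt
      have hwlt := hLLidxlt w
      have hult := hLLidxlt u
      have hun : LL.idxOf u < x := by omega
      have huS : u ∈ S := by
        by_contra huS
        by_cases huT : u ∈ T
        · have := (hidxT u huT).1
          omega
        · have := hidxM u huS huT
          omega
      have hwT : w ∈ T := by
        by_contra hwT
        by_cases hwS : w ∈ S
        · have := (hidxS w hwS).2
          have := (hidxS w hwS).1
          omega
        · have := hidxM w hwS hwT
          omega
      have hsp := hstp u w huS hwT hadj
      have h1 := hidxS u huS
      have h2 := hidxT w hwT
      omega
    refine ⟨⟨fun v => ⟨LL.idxOf v, hLLidxlt v⟩,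
      fun i => LL.get ⟨i.1, by rw [hLLlen]; exact i.isLt⟩, ?_, ?_⟩, ?_⟩
    · intro v
      exact List.idxOf_get (List.idxOf_lt_length_iff.mpr (hLLmem v))
    · intro i
      apply Fin.ext
      have := List.Nodup.idxOf_getElem hLLnd i.1 (by rw [hLLlen]; exact i.isLt)
      simpa [List.get_eq_getElem] using this
    · intro u w hadj
      have h1 := hkey u w hadj
      have h2 := hkey w u hadj.symm
      show |((LL.idxOf u : ℕ) : ℤ) - ((LL.idxOf w : ℕ) : ℤ)| ≤ ((n - x : ℕ) : ℤ)
      rw [abs_le]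
      constructor <;> omega
end

section
/- For every integer k ≥ 2, if a simple graph G on n vertices is the union of k Hamiltonian paths P_1, …, P_k (spanning paths on the common vertex set, whose edge sets together form the edge set of G), then the bandwidth of G is at most ⌈2(k−1)n/(2k−1)⌉. -/
/-- `P` is a Hamiltonian path graph: its edge set consists exactly of the consecutive
pairs of some bijective ordering of all the vertices, i.e. `P` is a spanning path. -/
def IsHamiltonianPathGraph {V : Type} [Fintype V] (P : SimpleGraph V) : Prop :=
  ∃ π : Fin (Fintype.card V) ≃ V,
    P.edgeSet = ⋃ (j : Fin (Fintype.card V)) (h : (j : ℕ) + 1 < Fintype.card V),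
      {s(π j, π ⟨(j : ℕ) + 1, h⟩)}

namespace BWProof
set_option linter.unusedSectionVars false

open Finset

variable {V : Type} [Fintype V] [DecidableEq V]

def Xset {N : ℕ} (e : Fin N ≃ V) (i : ℕ) : Finset V :=
  (Finset.univ.filter (fun j : Fin N => (j : ℕ) < i)).image e

lemma mem_Xset {N : ℕ} {e : Fin N ≃ V} {i : ℕ} {v : V} :
    v ∈ Xset e i ↔ ((e.symm v : ℕ) < i) := by
  constructor
  · rintro hv
    simp only [Xset, Finset.mem_image, Finset.mem_filter, Finset.mem_univ, true_and] at hv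
    obtain ⟨j, hj, rfl⟩ := hv
    simpa using hj
  · intro h
    simp only [Xset, Finset.mem_image, Finset.mem_filter, Finset.mem_univ, true_and]
    exact ⟨e.symm v, h, by simp⟩

lemma card_Xset_le {N : ℕ} (e : Fin N ≃ V) (i : ℕ) : (Xset e i).card ≤ i := by
  have h : (Xset e i).card ≤ (Finset.range i).card := by
    apply Finset.card_le_card_of_injOn (fun v => ((e.symm v : ℕ)))
    · intro a ha
      rw [Finset.mem_coe, mem_Xset] at ha; exact Finset.mem_range.mpr ha
    · intro a _ b _ hab
      apply e.symm.injective; exact Fin.ext hab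
  simpa using h

lemma card_Xset {N : ℕ} (e : Fin N ≃ V) {i : ℕ} (h : i ≤ N) : (Xset e i).card = i := by
  refine le_antisymm (card_Xset_le e i) ?_
  rcases Nat.eq_zero_or_pos i with rfl | hi
  · simp
  have hN : 0 < N := lt_of_lt_of_le hi h
  have key : (Finset.range i).card ≤ (Xset e i).card := by
    apply Finset.card_le_card_of_injOn (fun r : ℕ => e ⟨r % N, Nat.mod_lt _ hN⟩)
    · intro a ha
      rw [Finset.mem_coe, Finset.mem_range] at ha
      rw [Finset.mem_coe, mem_Xset]
      have hmod : a % N = a := Nat.mod_eq_of_lt (lt_of_lt_of_le ha h)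
      simp only [Equiv.symm_apply_apply]
      omega
    · intro a ha b hb hab
      rw [Finset.mem_coe, Finset.mem_range] at ha hb
      have heq := e.injective hab
      have h1 : a % N = a := Nat.mod_eq_of_lt (lt_of_lt_of_le ha h)
      have h2 : b % N = b := Nat.mod_eq_of_lt (lt_of_lt_of_le hb h)
      have : a % N = b % N := congrArg Fin.val heq
      omega
  simpa using key


def succC {N : ℕ} (j : Fin N) : Fin N := if h : (j : ℕ) + 1 < N then ⟨(j : ℕ) + 1, h⟩ else j

def predC {N : ℕ} (j : Fin N) : Fin N :=
  ⟨(j : ℕ) - 1, lt_of_le_of_lt (Nat.sub_le _ _) j.isLt⟩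

lemma succC_val_le {N : ℕ} (j : Fin N) : (succC j : ℕ) ≤ (j : ℕ) + 1 := by
  unfold succC; split <;> simp

lemma predC_val_le {N : ℕ} (j : Fin N) : (predC j : ℕ) ≤ (j : ℕ) := Nat.sub_le _ _

def fwd {N : ℕ} (e : Fin N ≃ V) (v : V) : V := e (succC (e.symm v))

def bwd {N : ℕ} (e : Fin N ≃ V) (v : V) : V := e (predC (e.symm v))

lemma Xset_mono {N : ℕ} (e : Fin N ≃ V) {i i' : ℕ} (h : i ≤ i') :
    Xset e i ⊆ Xset e i' := by
  intro v hv; rw [mem_Xset] at *; omega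

def NXset {N k : ℕ} (π : Fin k → (Fin N ≃ V)) (t₀ : Fin k) (i : ℕ) : Finset V :=
  Xset (π t₀) (i + 1) ∪ (Finset.univ.erase t₀).biUnion
    (fun t => (Xset (π t₀) i).image (fwd (π t)) ∪ (Xset (π t₀) i).image (bwd (π t)))

lemma Xset_subset_NXset {N k : ℕ} (π : Fin k → (Fin N ≃ V)) (t₀ : Fin k) (i : ℕ) :
    Xset (π t₀) i ⊆ NXset π t₀ i :=
  (Xset_mono _ (Nat.le_succ i)).trans Finset.subset_union_left

lemma NXset_mono {N k : ℕ} (π : Fin k → (Fin N ≃ V)) (t₀ : Fin k) {i i' : ℕ} (h : i ≤ i') :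
    NXset π t₀ i ⊆ NXset π t₀ i' := by
  intro v hv
  simp only [NXset, Finset.mem_union, Finset.mem_biUnion, Finset.mem_image] at hv ⊢
  rcases hv with hv | ⟨t, ht, hv⟩
  · exact Or.inl (Xset_mono _ (by omega) hv)
  · refine Or.inr ⟨t, ht, ?_⟩
    rcases hv with ⟨a, ha, rfl⟩ | ⟨a, ha, rfl⟩
    · exact Or.inl ⟨a, Xset_mono _ h ha, rfl⟩
    · exact Or.inr ⟨a, Xset_mono _ h ha, rfl⟩

lemma card_NXset_le {N k : ℕ} (π : Fin k → (Fin N ≃ V)) (t₀ : Fin k) (i : ℕ) (hk : 2 ≤ k) :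
    (NXset π t₀ i).card ≤ (2 * k - 1) * i + 1 := by
  obtain ⟨k', rfl⟩ : ∃ k', k = k' + 2 := ⟨k - 2, by omega⟩
  have h1 : (NXset π t₀ i).card ≤ (Xset (π t₀) (i + 1)).card +
      ((Finset.univ.erase t₀).biUnion
        (fun t => (Xset (π t₀) i).image (fwd (π t)) ∪ (Xset (π t₀) i).image (bwd (π t)))).card :=
    Finset.card_union_le _ _
  have h2 : ((Finset.univ.erase t₀).biUnion
      (fun t => (Xset (π t₀) i).image (fwd (π t)) ∪ (Xset (π t₀) i).image (bwd (π t)))).card ≤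
      (k' + 1) * (2 * i) := by
    calc _ ≤ ∑ t ∈ Finset.univ.erase t₀,
        ((Xset (π t₀) i).image (fwd (π t)) ∪ (Xset (π t₀) i).image (bwd (π t))).card :=
          Finset.card_biUnion_le
      _ ≤ ∑ _t ∈ Finset.univ.erase t₀, (2 * i) := by
          apply Finset.sum_le_sum
          intro t _
          calc ((Xset (π t₀) i).image (fwd (π t)) ∪ (Xset (π t₀) i).image (bwd (π t))).card
              ≤ ((Xset (π t₀) i).image (fwd (π t))).card +
                ((Xset (π t₀) i).image (bwd (π t))).card := Finset.card_union_le _ _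
            _ ≤ (Xset (π t₀) i).card + (Xset (π t₀) i).card :=
                Nat.add_le_add (Finset.card_image_le) (Finset.card_image_le)
            _ ≤ 2 * i := by have := card_Xset_le (π t₀) i; omega
      _ = (Finset.univ.erase t₀).card * (2 * i) := by rw [Finset.sum_const, smul_eq_mul]
      _ = (k' + 1) * (2 * i) := by
          rw [Finset.card_erase_of_mem (Finset.mem_univ _), Finset.card_univ, Fintype.card_fin]
          congr 1
  have h3 := card_Xset_le (π t₀) (i + 1)
  have hexpand : (2 * (k' + 2) - 1) * i + 1 = (i + 1) + (k' + 1) * (2 * i) := by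
    have h4 : 2 * (k' + 2) - 1 = 2 * k' + 3 := by omega
    rw [h4]; ring
  omega

lemma cover {N k : ℕ} {G : SimpleGraph V} (π : Fin k → (Fin N ≃ V))
    (hcov : ∀ u v, G.Adj u v → ∃ (t : Fin k) (j₁ j₂ : Fin N), (j₁ : ℕ) + 1 = (j₂ : ℕ) ∧
      ((u = π t j₁ ∧ v = π t j₂) ∨ (v = π t j₁ ∧ u = π t j₂)))
    {u v : V} (hadj : G.Adj u v) :
    ∃ t, v = fwd (π t) u ∨ v = bwd (π t) u := by
  obtain ⟨t, j₁, j₂, hj, hor⟩ := hcov u v hadj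
  refine ⟨t, ?_⟩
  rcases hor with ⟨hu, hv⟩ | ⟨hv, hu⟩
  · left
    rw [hu, hv, fwd, Equiv.symm_apply_apply]
    congr 1
    apply Fin.ext
    rw [succC, dif_pos (show (j₁ : ℕ) + 1 < N by have := j₂.isLt; omega)]
    exact hj.symm
  · right
    rw [hu, hv, bwd, Equiv.symm_apply_apply]
    congr 1
    apply Fin.ext
    show (j₁ : ℕ) = (j₂ : ℕ) - 1
    omega

lemma closure {N k : ℕ} {G : SimpleGraph V} (π : Fin k → (Fin N ≃ V)) (t₀ : Fin k)
    (hcov : ∀ u v, G.Adj u v → ∃ (t : Fin k) (j₁ j₂ : Fin N), (j₁ : ℕ) + 1 = (j₂ : ℕ) ∧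
      ((u = π t j₁ ∧ v = π t j₂) ∨ (v = π t j₁ ∧ u = π t j₂)))
    {u v : V} (hadj : G.Adj u v) {i : ℕ} (hu : u ∈ Xset (π t₀) i) :
    v ∈ NXset π t₀ i := by
  obtain ⟨t, hv⟩ := cover π hcov hadj
  by_cases ht : t = t₀
  · subst ht
    rw [mem_Xset] at hu
    apply Finset.mem_union_left
    rcases hv with rfl | rfl
    · rw [mem_Xset, fwd, Equiv.symm_apply_apply]
      have := succC_val_le ((π t).symm u); omega
    · rw [mem_Xset, bwd, Equiv.symm_apply_apply]
      have := predC_val_le ((π t).symm u); omega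
  · apply Finset.mem_union_right
    rw [Finset.mem_biUnion]
    refine ⟨t, Finset.mem_erase.mpr ⟨ht, Finset.mem_univ _⟩, ?_⟩
    rcases hv with rfl | rfl
    · exact Finset.mem_union_left _ (Finset.mem_image_of_mem _ hu)
    · exact Finset.mem_union_right _ (Finset.mem_image_of_mem _ hu)

def avail {N k : ℕ} (π : Fin k → (Fin N ≃ V)) (t₀ : Fin k) (m s j : ℕ) (used : Finset V) :
    Finset V :=
  Finset.univ \ (NXset π t₀ (m - j) ∪ Xset (π t₀) s ∪ used)

noncomputable def ysList {N k : ℕ} (π : Fin k → (Fin N ≃ V)) (t₀ : Fin k) (m s : ℕ) : ℕ → List V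
  | 0 => []
  | j + 1 =>
    if h : (avail π t₀ m s (j + 1) (ysList π t₀ m s j).toFinset).Nonempty then
      h.choose :: ysList π t₀ m s j
    else ysList π t₀ m s j

lemma ysList_spec {N k : ℕ} (π : Fin k → (Fin N ≃ V)) (t₀ : Fin k) (m s : ℕ)
    (hcardV : Fintype.card V = N) (hk : 2 ≤ k)
    (hm : s + 1 = m) (hmN : (2 * k - 1) * m ≤ N) :
    ∀ j, j ≤ s → (ysList π t₀ m s j).length = j ∧ (ysList π t₀ m s j).Nodup ∧
      (∀ r (hr : r < (ysList π t₀ m s j).length),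
        (ysList π t₀ m s j)[r] ∉ NXset π t₀ (m - (j - r)) ∧
        (ysList π t₀ m s j)[r] ∉ Xset (π t₀) s) := by
  have h3m : 3 * m ≤ N := le_trans (Nat.mul_le_mul_right m (by omega)) hmN
  intro j
  induction j with
  | zero =>
    intro _
    refine ⟨rfl, List.nodup_nil, ?_⟩
    intro r hr
    have h0 : ysList π t₀ m s 0 = [] := rfl
    rw [h0] at hr
    simp at hr
  | succ j ih =>
    intro hj1
    obtain ⟨hlen, hnodup, hprop⟩ := ih (by omega)
    set A := NXset π t₀ (m - (j + 1)) with hAdef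
    set B := Xset (π t₀) s with hBdef
    set C := (ysList π t₀ m s j).toFinset with hCdef
    have hne : (avail π t₀ m s (j + 1) C).Nonempty := by
      rw [← Finset.card_pos]
      have hused : C.card = j := by
        rw [hCdef, List.toFinset_card_of_nodup hnodup, hlen]
      have hA : A.card ≤ (2 * k - 1) * (m - (j + 1)) + 1 := card_NXset_le π t₀ _ hk
      have hBA : (B \ A).card ≤ j := by
        have hsub1 : Xset (π t₀) (m - (j + 1)) ⊆ A := Xset_subset_NXset π t₀ _
        have hsub2 : (B \ A) ⊆ B \ Xset (π t₀) (m - (j + 1)) :=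
          Finset.sdiff_subset_sdiff (le_refl _) hsub1
        have hXsub : Xset (π t₀) (m - (j + 1)) ⊆ B := Xset_mono _ (by omega)
        have hcards : (B \ Xset (π t₀) (m - (j + 1))).card = s - (m - (j + 1)) := by
          rw [Finset.card_sdiff_of_subset hXsub, hBdef, card_Xset _ (by omega), card_Xset _ (by omega)]
        calc (B \ A).card ≤ (B \ Xset (π t₀) (m - (j + 1))).card := Finset.card_le_card hsub2
          _ = s - (m - (j + 1)) := hcards
          _ ≤ j := by omega
      have hcardU : (NXset π t₀ (m - (j+1)) ∪ Xset (π t₀) s ∪ C).card ≤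
          ((2 * k - 1) * (m - (j + 1)) + 1) + j + j := by
        calc (A ∪ B ∪ C).card ≤ (A ∪ B).card + C.card := Finset.card_union_le _ _
          _ ≤ (A.card + (B \ A).card) + C.card := by
              have hAB : (A ∪ B).card = A.card + (B \ A).card := by
                rw [← Finset.card_union_of_disjoint Finset.disjoint_sdiff,
                  Finset.union_sdiff_self_eq_union]
              omega
          _ ≤ _ := by omega
      have hcards2 : (avail π t₀ m s (j + 1) C).card =
          N - (NXset π t₀ (m - (j+1)) ∪ Xset (π t₀) s ∪ C).card := by
        rw [avail, Finset.card_sdiff_of_subset (Finset.subset_univ _), Finset.card_univ, hcardV]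
      have harith : ((2 * k - 1) * (m - (j + 1)) + 1) + j + j < N := by
        have hsplit : (2 * k - 1) * (m - (j + 1)) + (2 * k - 1) * (j + 1) = (2 * k - 1) * m := by
          rw [← Nat.mul_add]
          congr 1
          omega
        have hge : 3 * (j + 1) ≤ (2 * k - 1) * (j + 1) := Nat.mul_le_mul_right _ (by omega)
        omega
      omega
    have hdef : ysList π t₀ m s (j + 1) = hne.choose :: ysList π t₀ m s j := by
      rw [ysList]
      exact dif_pos hne
    have hcmem : hne.choose ∈
        Finset.univ \ (NXset π t₀ (m - (j + 1)) ∪ Xset (π t₀) s ∪ C) := hne.choose_spec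
    have hcnot := (Finset.mem_sdiff.mp hcmem).2
    have hc1 : hne.choose ∉ NXset π t₀ (m - (j + 1)) := fun h =>
      hcnot (Finset.mem_union_left _ (Finset.mem_union_left _ h))
    have hc2 : hne.choose ∉ Xset (π t₀) s := fun h =>
      hcnot (Finset.mem_union_left _ (Finset.mem_union_right _ h))
    have hc3 : hne.choose ∉ C := fun h => hcnot (Finset.mem_union_right _ h)
    refine ⟨by rw [hdef]; simp [hlen], ?_, ?_⟩
    · rw [hdef]
      exact List.nodup_cons.mpr ⟨fun hmem => hc3 (List.mem_toFinset.mpr hmem), hnodup⟩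
    · intro r hr
      simp only [hdef] at hr ⊢
      match r with
      | 0 =>
        simp only [List.getElem_cons_zero]
        constructor
        · simpa using hc1
        · exact hc2
      | (r' + 1) =>
        simp only [List.getElem_cons_succ]
        have := hprop r' (by simp at hr; omega)
        have hidx : (j + 1) - (r' + 1) = j - r' := by omega
        rw [hidx]
        exact this

lemma ceil_eq (k n : ℕ) (hk : 2 ≤ k) :
    ⌈(2 * ((k : ℚ) - 1) * (n : ℚ)) / (2 * (k : ℚ) - 1)⌉₊ = n - n / (2 * k - 1) := by
  have hkq : (2 : ℚ) ≤ (k : ℚ) := by exact_mod_cast hk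
  have hd : (0 : ℚ) < 2 * (k : ℚ) - 1 := by linarith
  have hdq : ((2 * k - 1 : ℕ) : ℚ) = 2 * (k : ℚ) - 1 := by
    have h1 : 1 ≤ 2 * k := by omega
    push_cast [Nat.cast_sub h1]
    ring
  by_cases hn0 : n = 0
  · subst hn0; simp
  set d : ℕ := 2 * k - 1 with hddef
  set q : ℕ := n / d with hqdef
  have hd3 : 3 ≤ d := by omega
  have hq1 : d * q ≤ n := Nat.mul_div_le n d
  have hq2 : n < d * q + d := by
    have h1 : d * q + n % d = n := by rw [hqdef]; exact Nat.div_add_mod n d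
    have h2 : n % d < d := Nat.mod_lt _ (by omega)
    omega
  have hqn : q < n := by
    have h3 : 3 * q ≤ d * q := Nat.mul_le_mul_right q hd3
    omega
  rw [Nat.ceil_eq_iff (by omega : n - q ≠ 0)]
  have hcast : ((n - q : ℕ) : ℚ) = (n : ℚ) - (q : ℚ) := by
    push_cast [Nat.cast_sub (le_of_lt hqn)]; ring
  have hcast1 : ((n - q - 1 : ℕ) : ℚ) = (n : ℚ) - (q : ℚ) - 1 := by
    have h1 : 1 ≤ n - q := by omega
    rw [Nat.cast_sub h1, Nat.cast_sub (le_of_lt hqn)]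
    ring
  constructor
  · rw [lt_div_iff₀ hd, hcast1]
    have hq2q : (n : ℚ) < (d : ℚ) * (q : ℚ) + (d : ℚ) := by exact_mod_cast hq2
    rw [hdq] at hq2q
    nlinarith
  · rw [div_le_iff₀ hd, hcast]
    have hq1q : (d : ℚ) * (q : ℚ) ≤ (n : ℚ) := by exact_mod_cast hq1
    rw [hdq] at hq1q
    nlinarith

theorem mainLemma {V : Type} [Fintype V] [DecidableEq V] {k N : ℕ} (hk : 2 ≤ k)
    (hNV : Fintype.card V = N)
    (G : SimpleGraph V) (π : Fin k → (Fin N ≃ V))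
    (hcov : ∀ u v, G.Adj u v → ∃ (t : Fin k) (j₁ j₂ : Fin N),
      (j₁ : ℕ) + 1 = (j₂ : ℕ) ∧
      ((u = π t j₁ ∧ v = π t j₂) ∨ (v = π t j₁ ∧ u = π t j₂))) :
    ∃ e : Fin N ≃ V, ∀ u v : V, G.Adj u v →
      |((e.symm u : ℕ) : ℤ) - ((e.symm v : ℕ) : ℤ)| ≤ ((N - N / (2 * k - 1) : ℕ) : ℤ) := by
  classical
  set m := N / (2 * k - 1) with hmdef
  by_cases hm0 : m = 0
  · refine ⟨(finCongr hNV.symm).trans (Fintype.equivFin V).symm, ?_⟩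
    intro u v _
    set e := (finCongr hNV.symm).trans (Fintype.equivFin V).symm
    have h1 : ((e.symm u : ℕ)) < N := (e.symm u).isLt
    have h2 : ((e.symm v : ℕ)) < N := (e.symm v).isLt
    rw [hm0, abs_sub_le_iff]
    constructor <;> omega
  -- main case
  have hm1 : 1 ≤ m := Nat.pos_of_ne_zero hm0
  have hmN : (2 * k - 1) * m ≤ N := by
    rw [hmdef, Nat.mul_comm]; exact Nat.div_mul_le_self N (2 * k - 1)
  have h3m : 3 * m ≤ N := le_trans (Nat.mul_le_mul_right m (by omega)) hmN
  set t₀ : Fin k := ⟨0, by omega⟩ with ht₀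
  set s : ℕ := m - 1 with hsdef
  have hsm : s + 1 = m := by omega
  have hsN : 2 * s + 2 ≤ N := by omega
  -- the chosen y vertices
  set ysF : List V := ysList π t₀ m s s with hysF
  obtain ⟨hyslen, hysnodup, hysprop⟩ := ysList_spec π t₀ m s hNV hk hsm hmN s (le_refl s)
  -- the x vertices: first s vertices of path t₀
  set xs : List V := ((List.finRange N).take s).map (π t₀) with hxs
  have hxslen : xs.length = s := by
    simp [hxs]; omega
  have hxsget : ∀ r (hr : r < xs.length), xs[r] = (π t₀) ⟨r, by
      rw [hxslen] at hr; omega⟩ := by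
    intro r hr
    simp only [hxs, List.getElem_map, List.getElem_take, List.getElem_finRange]
    rfl
  have hxsmemX : ∀ a ∈ xs, a ∈ Xset (π t₀) s := by
    intro a ha
    obtain ⟨r, hr, rfl⟩ := List.mem_iff_getElem.mp ha
    rw [hxsget r hr, mem_Xset, Equiv.symm_apply_apply]
    rw [hxslen] at hr
    exact hr
  have hxsnodup : xs.Nodup := by
    rw [hxs]
    exact List.Nodup.map (π t₀).injective
      (List.Nodup.sublist (List.take_sublist _ _) (List.nodup_finRange N))
  have hysnotX : ∀ a ∈ ysF, a ∉ Xset (π t₀) s := by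
    intro a ha
    obtain ⟨r, hr, rfl⟩ := List.mem_iff_getElem.mp ha
    exact (hysprop r hr).2
  -- middle vertices
  set mid : List V := (Finset.univ \ (Xset (π t₀) s ∪ ysF.toFinset)).toList with hmid
  have hysFcard : ysF.toFinset.card = s := by
    rw [List.toFinset_card_of_nodup hysnodup, hyslen]
  have hXcard : (Xset (π t₀) s).card = s := card_Xset _ (by omega)
  have hdisjXy : Disjoint (Xset (π t₀) s) ysF.toFinset := by
    rw [Finset.disjoint_right]
    intro a ha
    exact hysnotX a (List.mem_toFinset.mp ha)
  have hmidlen : mid.length = N - 2 * s := by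
    rw [hmid, Finset.length_toList, Finset.card_sdiff_of_subset (Finset.subset_univ _),
      Finset.card_univ, Finset.card_union_of_disjoint hdisjXy, hXcard, hysFcard, hNV]
    omega
  -- the full ordering
  set L : List V := xs ++ (mid ++ ysF) with hL
  have hLlen : L.length = N := by
    rw [hL, List.length_append, List.length_append, hxslen, hmidlen, hysF, hyslen]
    omega
  have hmidspec : ∀ a ∈ mid, a ∉ Xset (π t₀) s ∧ a ∉ ysF.toFinset := by
    intro a ha
    rw [hmid, Finset.mem_toList, Finset.mem_sdiff, Finset.mem_union] at ha
    constructor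
    · exact fun h => ha.2 (Or.inl h)
    · exact fun h => ha.2 (Or.inr h)
  have hLnodup : L.Nodup := by
    rw [hL, List.nodup_append]
    refine ⟨hxsnodup, ?_, ?_⟩
    · rw [List.nodup_append]
      refine ⟨Finset.nodup_toList _, hysnodup, ?_⟩
      intro a ha _ hay rfl
      exact (hmidspec a ha).2 (List.mem_toFinset.mpr hay)
    · intro a ha _ hamem rfl
      have haX := hxsmemX a ha
      rw [List.mem_append] at hamem
      rcases hamem with ham | hay
      · exact (hmidspec a ham).1 haX
      · exact hysnotX a hay haX
  set f : Fin N → V := fun p => L[(p : ℕ)]'(by rw [hLlen]; exact p.isLt) with hf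
  have hfinj : Function.Injective f := by
    intro p q hpq
    have := (List.Nodup.getElem_inj_iff hLnodup).mp hpq
    exact Fin.ext this
  have hfbij : Function.Bijective f :=
    (Fintype.bijective_iff_injective_and_card f).mpr ⟨hfinj, by rw [Fintype.card_fin, hNV]⟩
  set e : Fin N ≃ V := Equiv.ofBijective f hfbij with he
  refine ⟨e, ?_⟩
  have hfe : ∀ u : V, f (e.symm u) = u := fun u => e.apply_symm_apply u
  -- the one-sided claim
  have claim : ∀ u v : V, G.Adj u v → ((e.symm u : ℕ) ≤ (e.symm v : ℕ)) →
      ((e.symm v : ℕ)) - ((e.symm u : ℕ)) ≤ N - m := by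
    intro u v hadj hle
    have hppN : ((e.symm u : ℕ)) < N := (e.symm u).isLt
    have hqqN : ((e.symm v : ℕ)) < N := (e.symm v).isLt
    by_cases h1 : s ≤ ((e.symm u : ℕ))
    · omega
    by_cases h2 : ((e.symm v : ℕ)) + s + 1 ≤ N
    · omega
    have hpps : ((e.symm u : ℕ)) < s := by omega
    have hqqs : N - s ≤ ((e.symm v : ℕ)) := by omega
    -- identify u as an x vertex
    have hu1 : u = (π t₀) ⟨((e.symm u : ℕ)), by omega⟩ := by
      conv_lhs => rw [← hfe u]
      show (xs ++ (mid ++ ysF))[((e.symm u : ℕ))]'(by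
        simp [hxslen, hmidlen, hyslen]; omega) = _
      rw [List.getElem_append_left (by rw [hxslen]; omega),
        hxsget _ (by rw [hxslen]; omega)]
    -- identify v as a y vertex
    have hidxlt : ((e.symm v : ℕ)) - xs.length - mid.length < ysF.length := by
      rw [hxslen, hmidlen, hyslen]; omega
    have hv1 : v = ysF[((e.symm v : ℕ)) - xs.length - mid.length]'hidxlt := by
      conv_lhs => rw [← hfe v]
      show (xs ++ (mid ++ ysF))[((e.symm v : ℕ))]'(by
        simp [hxslen, hmidlen, hyslen]; omega) = _
      rw [List.getElem_append_right (by rw [hxslen]; omega),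
        List.getElem_append_right (by rw [hxslen, hmidlen]; omega)]
    set idx := ((e.symm v : ℕ)) - xs.length - mid.length with hidxdef
    have hidxval : idx = ((e.symm v : ℕ)) - s - (N - 2 * s) := by
      rw [hidxdef, hxslen, hmidlen]
    have hidxs : idx < s := by rw [← hyslen]; exact hidxlt
    by_cases hab : ((e.symm u : ℕ)) + 1 + (s - idx) ≤ m
    · exfalso
      have huX : u ∈ Xset (π t₀) (m - (s - idx)) := by
        rw [hu1, mem_Xset, Equiv.symm_apply_apply]
        show ((e.symm u : ℕ)) < m - (s - idx)
        omega
      have hvN : v ∈ NXset π t₀ (m - (s - idx)) := closure π t₀ hcov hadj huX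
      rw [hv1] at hvN
      exact (hysprop idx hidxlt).1 hvN
    · omega
  intro u v hadj
  have h1 := claim u v hadj
  have h2 := claim v u hadj.symm
  have hu := (e.symm u).isLt
  have hv := (e.symm v).isLt
  rw [abs_sub_le_iff]
  rcases le_total ((e.symm u : ℕ)) ((e.symm v : ℕ)) with hle | hle
  · have := h1 hle; constructor <;> omega
  · have := h2 hle; constructor <;> omega

end BWProof

/-- For every `k ≥ 2`, if a simple graph `G` on `n` vertices is the union of `k`
Hamiltonian (spanning) paths, then the bandwidth of `G` is at most `⌈2(k−1)n/(2k−1)⌉`. -/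
theorem bandwidth_of_union_of_hamiltonian_paths (k : ℕ) (hk : 2 ≤ k)
    (V : Type) [Fintype V] (G : SimpleGraph V)
    (hG : ∃ P : Fin k → SimpleGraph V, (∀ i, IsHamiltonianPathGraph (P i)) ∧
      G.edgeSet = ⋃ i, (P i).edgeSet) :
    BandwidthLE G ⌈(2 * ((k : ℚ) - 1) * (Fintype.card V : ℚ)) / (2 * k - 1)⌉₊ := by
  classical
  obtain ⟨P, hham, hedge⟩ := hG
  choose π hπ using hham
  have hcov : ∀ u v, G.Adj u v → ∃ (t : Fin k) (j₁ j₂ : Fin (Fintype.card V)),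
      (j₁ : ℕ) + 1 = (j₂ : ℕ) ∧
      ((u = π t j₁ ∧ v = π t j₂) ∨ (v = π t j₁ ∧ u = π t j₂)) := by
    intro u v huv
    have hmem : s(u, v) ∈ G.edgeSet := G.mem_edgeSet.mpr huv
    rw [hedge, Set.mem_iUnion] at hmem
    obtain ⟨t, ht⟩ := hmem
    rw [hπ t] at ht
    simp only [Set.mem_iUnion, Set.mem_singleton_iff] at ht
    obtain ⟨j, hj, heq⟩ := ht
    rcases Sym2.eq_iff.mp heq with ⟨h1, h2⟩ | ⟨h1, h2⟩
    · exact ⟨t, j, ⟨(j : ℕ) + 1, hj⟩, rfl, Or.inl ⟨h1, h2⟩⟩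
    · exact ⟨t, j, ⟨(j : ℕ) + 1, hj⟩, rfl, Or.inr ⟨h2, h1⟩⟩
  obtain ⟨e, he⟩ := BWProof.mainLemma hk rfl G π hcov
  rw [BWProof.ceil_eq k (Fintype.card V) hk]
  exact ⟨e.symm, fun u v huv => he u v huv⟩
end

section
/- For every integer κ ≥ 1 there is a constant C_κ (the paper obtains C_κ = 2^κ up to lower-order terms) such that every sequence τ_1, …, τ_n of points of ℝ^κ whose values in each coordinate are pairwise distinct admits a partition of the index set {1, …, n} into at most C_κ · n^{1−1/2^κ} sets, each of which is monotone in every coordinate. -/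
/-- An index set `I` is monotone in every coordinate for the sequence `τ` if for each
coordinate `j`, the map `i ↦ τ i j` restricted to `I` (indices in increasing order) is
either monotonically increasing or monotonically decreasing. -/
def MonotoneAll {κ n : ℕ} (τ : Fin n → Fin κ → ℝ) (I : Set (Fin n)) : Prop :=
  ∀ j : Fin κ,
    (∀ i ∈ I, ∀ i' ∈ I, i ≤ i' → τ i j ≤ τ i' j) ∨
    (∀ i ∈ I, ∀ i' ∈ I, i ≤ i' → τ i' j ≤ τ i j)


namespace MonoPart
variable {n : ℕ}

noncomputable def chainLen (τ : Fin n → ℝ) (S : Finset (Fin n)) (i : Fin n) : ℕ :=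
  1 + ((S.filter fun i' => i' < i ∧ τ i' < τ i).attach.sup fun x => chainLen τ S x.1)
termination_by i.1
decreasing_by
  exact (Finset.mem_filter.mp x.2).2.1

lemma one_le_chainLen (τ : Fin n → ℝ) (S : Finset (Fin n)) (i : Fin n) :
    1 ≤ chainLen τ S i := by
  rw [chainLen]; omega

lemma chainLen_lt (τ : Fin n → ℝ) (S : Finset (Fin n)) {i i' : Fin n}
    (h1 : i' ∈ S) (h2 : i' < i) (h3 : τ i' < τ i) :
    chainLen τ S i' < chainLen τ S i := by
  conv_rhs => rw [chainLen]
  have hm : i' ∈ S.filter fun a => a < i ∧ τ a < τ i := by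
    simp [Finset.mem_filter, h1, h2, h3]
  have := Finset.le_sup (f := fun x : {x // x ∈ S.filter fun a => a < i ∧ τ a < τ i} => chainLen τ S x.1)
    (Finset.mem_attach _ ⟨i', hm⟩)
  simp only at this
  omega

lemma exists_pred (τ : Fin n → ℝ) (S : Finset (Fin n)) {i : Fin n} {m : ℕ}
    (h : chainLen τ S i = m + 1) (hm : 1 ≤ m) :
    ∃ i' ∈ S, i' < i ∧ τ i' < τ i ∧ chainLen τ S i' = m := by
  rw [chainLen] at h
  have hsup : ((S.filter fun i' => i' < i ∧ τ i' < τ i).attach.sup fun x => chainLen τ S x.1) = m := by omega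
  have hne : ((S.filter fun i' => i' < i ∧ τ i' < τ i).attach).Nonempty := by
    by_contra hc
    rw [Finset.not_nonempty_iff_eq_empty] at hc
    rw [hc] at hsup
    simp at hsup
    omega
  obtain ⟨x, -, hx⟩ := Finset.exists_mem_eq_sup _ hne fun x => chainLen τ S x.1
  have hmem := Finset.mem_filter.mp x.2
  rw [hsup] at hx
  exact ⟨x.1, hmem.1, hmem.2.1, hmem.2.2, hx.symm⟩

lemma exists_chain (τ : Fin n → ℝ) (S : Finset (Fin n)) :
    ∀ m : ℕ, ∀ i ∈ S, chainLen τ S i = m →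
    ∃ T : Finset (Fin n), T ⊆ S ∧ i ∈ T ∧ T.card = m ∧ (∀ a ∈ T, a ≤ i) ∧
      (∀ a ∈ T, ∀ b ∈ T, a < b → τ a < τ b) := by
  intro m
  induction m using Nat.strong_induction_on with
  | _ m ih =>
    intro i hi hm
    have h1 := one_le_chainLen τ S i
    obtain ⟨m', rfl⟩ : ∃ m', m = m' + 1 := ⟨m - 1, by omega⟩
    by_cases hm' : m' = 0
    · subst hm'
      exact ⟨{i}, by simp [hi], by simp, by simp, by simp, by simp⟩
    · obtain ⟨i', hi'S, hlt, hτ, hlen⟩ := exists_pred τ S hm (by omega)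
      obtain ⟨T', hT'sub, hi'T', hcard, hle, hmono⟩ := ih m' (by omega) i' hi'S hlen
      have hiT' : i ∉ T' := fun h => absurd (hle i h) (not_le.mpr hlt)
      refine ⟨insert i T', Finset.insert_subset hi hT'sub, Finset.mem_insert_self _ _, ?_, ?_, ?_⟩
      · rw [Finset.card_insert_of_notMem hiT', hcard]
      · intro a ha
        rcases Finset.mem_insert.mp ha with h | h
        · exact le_of_eq h
        · exact le_trans (hle a h) (le_of_lt hlt)
      · intro a ha b hb hab
        rcases Finset.mem_insert.mp ha with h | h <;> rcases Finset.mem_insert.mp hb with h' | h'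
        · subst h h'; exact absurd hab (lt_irrefl _)
        · subst h
          exact absurd (lt_of_lt_of_le hab (le_trans (hle b h') (le_of_lt hlt))) (lt_irrefl _)
        · subst h'
          rcases eq_or_lt_of_le (hle a h) with h'' | h''
          · rw [Fin.ext_iff] at h''
            rw [show a = i' from Fin.ext h'']
            exact hτ
          · exact lt_trans (hmono a h i' hi'T' h'') hτ
        · exact hmono a h b h' hab

def MonoF (τ : Fin n → ℝ) (A : Finset (Fin n)) : Prop :=
  (∀ a ∈ A, ∀ b ∈ A, a ≤ b → τ a ≤ τ b) ∨ (∀ a ∈ A, ∀ b ∈ A, a ≤ b → τ b ≤ τ a)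

lemma MonoF.subset {τ : Fin n → ℝ} {A B : Finset (Fin n)} (h : MonoF τ A) (hBA : B ⊆ A) :
    MonoF τ B := by
  rcases h with h | h
  · exact Or.inl fun a ha b hb hab => h a (hBA ha) b (hBA hb) hab
  · exact Or.inr fun a ha b hb hab => h a (hBA ha) b (hBA hb) hab

lemma monoCover (τ : Fin n → ℝ) (r : ℕ) (hr : 1 ≤ r) :
    ∀ s : ℕ, ∀ S : Finset (Fin n), S.card = s →
    ∃ P : List (Finset (Fin n)), (∀ A ∈ P, A ⊆ S ∧ MonoF τ A) ∧
      (∀ i ∈ S, ∃ A ∈ P, i ∈ A) ∧ (P.map Finset.card).sum ≤ s ∧ P.length ≤ s / r + r := by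
  intro s
  induction s using Nat.strong_induction_on with
  | _ s ih =>
    intro S hS
    set m := S.sup (chainLen τ S) with hmdef
    by_cases hmr : m ≤ r
    · -- Dilworth-style: classes by chainLen value
      refine ⟨(List.range r).map fun t => S.filter fun i => chainLen τ S i = t + 1, ?_, ?_, ?_, ?_⟩
      · intro A hA
        obtain ⟨t, -, rfl⟩ := List.mem_map.mp hA
        refine ⟨Finset.filter_subset _ _, Or.inr ?_⟩
        intro a ha b hb hab
        rw [Finset.mem_filter] at ha hb
        rcases eq_or_lt_of_le hab with h | h
        · rw [h]
        · by_contra hc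
          push_neg at hc
          have := chainLen_lt τ S ha.1 h hc
          omega
      · intro i hiS
        have h1 := one_le_chainLen τ S i
        have h2 : chainLen τ S i ≤ m := Finset.le_sup hiS
        refine ⟨S.filter fun a => chainLen τ S a = (chainLen τ S i - 1) + 1, ?_, ?_⟩
        · exact List.mem_map.mpr ⟨chainLen τ S i - 1, List.mem_range.mpr (by omega), rfl⟩
        · rw [Finset.mem_filter]
          exact ⟨hiS, by omega⟩
      · -- sum of cards
        rw [List.map_map]
        have : ((List.range r).map fun t => (S.filter fun i => chainLen τ S i = t + 1).card).sum
            = ∑ t ∈ Finset.range r, (S.filter fun i => chainLen τ S i = t + 1).card := rfl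
        rw [show ((Finset.card ∘ fun t => S.filter fun i => chainLen τ S i = t + 1) : ℕ → ℕ)
            = fun t => (S.filter fun i => chainLen τ S i = t + 1).card from rfl, this]
        calc ∑ t ∈ Finset.range r, (S.filter fun i => chainLen τ S i = t + 1).card
            = ((Finset.range r).biUnion fun t => S.filter fun i => chainLen τ S i = t + 1).card := by
              rw [Finset.card_biUnion]
              intro a _ b _ hab
              rw [Function.onFun, Finset.disjoint_left]
              intro x hx hx'
              rw [Finset.mem_filter] at hx hx'
              omega
          _ ≤ S.card := Finset.card_le_card (by
              intro x hx
              obtain ⟨t, -, hx⟩ := Finset.mem_biUnion.mp hx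
              exact (Finset.mem_filter.mp hx).1)
          _ = s := hS
      · simpa using Nat.le_add_left r (s / r)
    · -- remove a long chain
      push_neg at hmr
      have hSne : S.Nonempty := by
        rcases Finset.eq_empty_or_nonempty S with h | h
        · exfalso; rw [h] at hmdef; simp [hmdef] at hmr
        · exact h
      obtain ⟨i, hiS, hisup⟩ := Finset.exists_mem_eq_sup S hSne (chainLen τ S)
      obtain ⟨T, hTsub, hiT, hTcard, -, hTmono⟩ := exists_chain τ S m i hiS hisup.symm
      have hms : m ≤ s := by rw [← hS, ← hTcard]; exact Finset.card_le_card hTsub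
      have hcard' : (S \ T).card = s - m := by rw [Finset.card_sdiff_of_subset hTsub, hS, hTcard]
      obtain ⟨P', hP'mono, hP'cov, hP'sum, hP'len⟩ := ih (s - m) (by omega) (S \ T) hcard'
      refine ⟨T :: P', ?_, ?_, ?_, ?_⟩
      · intro A hA
        rcases List.mem_cons.mp hA with h | h
        · subst h
          refine ⟨hTsub, Or.inl ?_⟩
          intro a ha b hb hab
          rcases eq_or_lt_of_le hab with h | h
          · rw [h]
          · exact le_of_lt (hTmono a ha b hb h)
        · obtain ⟨h1, h2⟩ := hP'mono A h
          exact ⟨h1.trans (Finset.sdiff_subset), h2⟩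
      · intro j hjS
        by_cases hjT : j ∈ T
        · exact ⟨T, List.mem_cons_self, hjT⟩
        · obtain ⟨A, hA, hjA⟩ := hP'cov j (Finset.mem_sdiff.mpr ⟨hjS, hjT⟩)
          exact ⟨A, List.mem_cons_of_mem _ hA, hjA⟩
      · simp only [List.map_cons, List.sum_cons, hTcard]
        omega
      · simp only [List.length_cons]
        have h1 : (s - m) / r + 1 ≤ s / r := by
          have : (s - m) / r + 1 = (s - m + r) / r := (Nat.add_div_right _ (by omega)).symm
          rw [this]
          exact Nat.div_le_div_right (by omega)
        omega


lemma splitCover {α : Type*} [DecidableEq α] (r : ℕ) (hr : 1 ≤ r) :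
    ∀ s : ℕ, ∀ A : Finset α, A.card = s →
    ∃ Q : List (Finset α), (∀ B ∈ Q, B ⊆ A ∧ B.card ≤ r) ∧
      (∀ i ∈ A, ∃ B ∈ Q, i ∈ B) ∧ Q.length ≤ s / r + 1 := by
  intro s
  induction s using Nat.strong_induction_on with
  | _ s ih =>
    intro A hA
    by_cases hsr : s ≤ r
    · exact ⟨[A], by simp [hA, hsr], fun i hi => ⟨A, by simp, hi⟩, by simp⟩
    · obtain ⟨T, hTsub, hTcard⟩ := Finset.exists_subset_card_eq (le_of_lt (by omega : r < A.card))
      have hcard' : (A \ T).card = s - r := by rw [Finset.card_sdiff_of_subset hTsub, hA, hTcard]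
      obtain ⟨Q', hQ'sub, hQ'cov, hQ'len⟩ := ih (s - r) (by omega) (A \ T) hcard'
      refine ⟨T :: Q', ?_, ?_, ?_⟩
      · intro B hB
        rcases List.mem_cons.mp hB with h | h
        · subst h; exact ⟨hTsub, le_of_eq hTcard⟩
        · exact ⟨(hQ'sub B h).1.trans Finset.sdiff_subset, (hQ'sub B h).2⟩
      · intro i hi
        by_cases hiT : i ∈ T
        · exact ⟨T, List.mem_cons_self, hiT⟩
        · obtain ⟨B, hB, hiB⟩ := hQ'cov i (Finset.mem_sdiff.mpr ⟨hi, hiT⟩)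
          exact ⟨B, List.mem_cons_of_mem _ hB, hiB⟩
      · simp only [List.length_cons]
        have heq : (s - r) / r + 1 = (s - r + r) / r := (Nat.add_div_right _ (by omega)).symm
        have h2 : s - r + r = s := by omega
        rw [h2] at heq
        exact Nat.succ_le_succ (le_of_le_of_eq hQ'len heq)

lemma cover_glue {α : Type*} (G : Finset α → Prop) (c : Finset α → ℝ) :
    ∀ P : List (Finset α),
      (∀ A ∈ P, ∃ Q : List (Finset α), (∀ B ∈ Q, B ⊆ A ∧ G B) ∧
        (∀ i ∈ A, ∃ B ∈ Q, i ∈ B) ∧ (Q.length : ℝ) ≤ c A) →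
      ∃ Q : List (Finset α), (∀ B ∈ Q, G B ∧ ∃ A ∈ P, B ⊆ A) ∧
        (∀ A ∈ P, ∀ i ∈ A, ∃ B ∈ Q, i ∈ B) ∧ (Q.length : ℝ) ≤ (P.map c).sum := by
  intro P
  induction P with
  | nil => exact fun _ => ⟨[], by simp, by simp, by simp⟩
  | cons A P' ihP =>
    intro h
    obtain ⟨QA, hQA1, hQA2, hQA3⟩ := h A (List.mem_cons_self)
    obtain ⟨Q', hQ'1, hQ'2, hQ'3⟩ := ihP fun A' hA' => h A' (List.mem_cons_of_mem _ hA')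
    refine ⟨QA ++ Q', ?_, ?_, ?_⟩
    · intro B hB
      rcases List.mem_append.mp hB with h' | h'
      · exact ⟨(hQA1 B h').2, A, List.mem_cons_self, (hQA1 B h').1⟩
      · obtain ⟨hG, A', hA', hsub⟩ := hQ'1 B h'
        exact ⟨hG, A', List.mem_cons_of_mem _ hA', hsub⟩
    · intro A' hA' i hi
      rcases List.mem_cons.mp hA' with h' | h'
      · subst h'
        obtain ⟨B, hB, hiB⟩ := hQA2 i hi
        exact ⟨B, List.mem_append_left _ hB, hiB⟩
      · obtain ⟨B, hB, hiB⟩ := hQ'2 A' h' i hi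
        exact ⟨B, List.mem_append_right _ hB, hiB⟩
    · rw [List.length_append, List.map_cons, List.sum_cons]
      push_cast
      exact add_le_add hQA3 hQ'3

lemma sum_div_add {α : Type*} (r : ℝ) (P : List (Finset α)) :
    (P.map fun A => (A.card : ℝ) / r + 1).sum = ((P.map Finset.card).sum : ℝ) / r + P.length := by
  induction P with
  | nil => simp
  | cons A P' ihP =>
    simp only [List.map_cons, List.sum_cons, ihP, List.length_cons]
    push_cast
    ring

/-- Combined: cover `S` by chunks monotone in `τ`, each of size ≤ `r`,
with at most `2s/r + r` chunks (real bound). -/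
lemma chunkCover (τ : Fin n → ℝ) (r : ℕ) (hr : 1 ≤ r) (S : Finset (Fin n)) :
    ∃ Q : List (Finset (Fin n)), (∀ B ∈ Q, B ⊆ S ∧ MonoF τ B ∧ B.card ≤ r) ∧
      (∀ i ∈ S, ∃ B ∈ Q, i ∈ B) ∧
      (Q.length : ℝ) ≤ 2 * S.card / r + r := by
  obtain ⟨P, hPmono, hPcov, hPsum, hPlen⟩ := monoCover τ r hr S.card S rfl
  have hglue : ∀ A ∈ P, ∃ Q : List (Finset (Fin n)),
      (∀ B ∈ Q, B ⊆ A ∧ (MonoF τ B ∧ B.card ≤ r)) ∧ (∀ i ∈ A, ∃ B ∈ Q, i ∈ B) ∧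
      (Q.length : ℝ) ≤ (A.card : ℝ) / r + 1 := by
    intro A hA
    obtain ⟨Q, hQ1, hQ2, hQ3⟩ := splitCover r hr A.card A rfl
    refine ⟨Q, fun B hB => ⟨(hQ1 B hB).1, (hPmono A hA).2.subset (hQ1 B hB).1, (hQ1 B hB).2⟩, hQ2, ?_⟩
    calc (Q.length : ℝ) ≤ ((A.card / r + 1 : ℕ) : ℝ) := by exact_mod_cast hQ3
      _ ≤ (A.card : ℝ) / r + 1 := by
          push_cast
          have : ((A.card / r : ℕ) : ℝ) ≤ (A.card : ℝ) / r := Nat.cast_div_le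
          linarith
  obtain ⟨Q, hQ1, hQ2, hQ3⟩ := cover_glue _ (fun A => (A.card : ℝ) / r + 1) P hglue
  refine ⟨Q, ?_, ?_, ?_⟩
  · intro B hB
    obtain ⟨⟨hmono, hcard⟩, A, hA, hsub⟩ := hQ1 B hB
    exact ⟨hsub.trans (hPmono A hA).1, hmono, hcard⟩
  · intro i hi
    obtain ⟨A, hA, hiA⟩ := hPcov i hi
    exact hQ2 A hA i hiA
  · refine hQ3.trans ?_
    rw [sum_div_add]
    have h1 : ((P.map Finset.card).sum : ℝ) ≤ (S.card : ℝ) := by exact_mod_cast hPsum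
    have h2 : (P.length : ℝ) ≤ (S.card : ℝ) / r + r := by
      calc (P.length : ℝ) ≤ ((S.card / r + r : ℕ) : ℝ) := by exact_mod_cast hPlen
        _ ≤ (S.card : ℝ) / r + r := by
            push_cast
            have : ((S.card / r : ℕ) : ℝ) ≤ (S.card : ℝ) / r := Nat.cast_div_le
            linarith
    have hr' : (0 : ℝ) < r := by exact_mod_cast hr
    have h3 : ((P.map Finset.card).sum : ℝ) / r ≤ (S.card : ℝ) / r := by gcongr
    rw [mul_div_assoc]
    linarith

lemma coverAll {κ : ℕ} (τ : Fin n → Fin κ → ℝ) :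
    ∀ L : List (Fin κ), ∀ S : Finset (Fin n),
    ∃ P : List (Finset (Fin n)),
      (∀ A ∈ P, A ⊆ S ∧ ∀ j ∈ L, MonoF (fun i => τ i j) A) ∧
      (∀ i ∈ S, ∃ A ∈ P, i ∈ A) ∧
      (P.length : ℝ) ≤ 8 ^ L.length * (S.card : ℝ) ^ ((1 : ℝ) - (1/2 : ℝ) ^ L.length) := by
  intro L
  induction L with
  | nil =>
    intro S
    refine ⟨[S], by simp, fun i hi => ⟨S, by simp, hi⟩, ?_⟩
    simp [Real.rpow_zero]
  | cons j L' ihL =>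
    intro S
    set k := L'.length with hk
    rcases Nat.eq_zero_or_pos S.card with hs0 | hs1
    · refine ⟨[], by simp, ?_, ?_⟩
      · intro i hi; rw [Finset.card_eq_zero.mp hs0] at hi; simp at hi
      · have hepos : (0:ℝ) < 1 - (1/2 : ℝ) ^ (j :: L').length := by
          have : ((1:ℝ)/2) ^ (j :: L').length < 1 :=
            pow_lt_one₀ (by norm_num) (by norm_num) (by simp)
          linarith
        rw [hs0]
        rw [Nat.cast_zero, Real.zero_rpow (ne_of_gt hepos)]
        simp
    · set s := S.card with hsdef
      set r := Nat.sqrt s + 1 with hrdef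
      have hr1 : 1 ≤ r := by omega
      obtain ⟨Q1, hQ1props, hQ1cov, hQ1len⟩ := chunkCover (fun i => τ i j) r hr1 S
      set e : ℝ := (1:ℝ) - (1/2 : ℝ) ^ k with hedef
      have he0 : 0 ≤ e := by
        have : ((1:ℝ)/2) ^ k ≤ 1 := pow_le_one₀ (by norm_num) (by norm_num)
        rw [hedef]; linarith
      have he1 : e ≤ 1 := by
        have : (0:ℝ) ≤ ((1:ℝ)/2) ^ k := by positivity
        rw [hedef]; linarith
      set M : ℝ := 8 ^ k * (r : ℝ) ^ e with hMdef
      have hMnn : 0 ≤ M := by positivity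
      have hglue : ∀ B ∈ Q1, ∃ R : List (Finset (Fin n)),
          (∀ A ∈ R, A ⊆ B ∧ ∀ j' ∈ L', MonoF (fun i => τ i j') A) ∧
          (∀ i ∈ B, ∃ A ∈ R, i ∈ A) ∧
          (R.length : ℝ) ≤ 8 ^ k * (B.card : ℝ) ^ e := fun B _ => ihL B
      obtain ⟨Q, hQmono, hQcov, hQlen⟩ :=
        cover_glue (fun A => ∀ j' ∈ L', MonoF (fun i => τ i j') A)
          (fun B => 8 ^ k * (B.card : ℝ) ^ e) Q1 hglue
      refine ⟨Q, ?_, ?_, ?_⟩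
      · intro A hA
        obtain ⟨hmono', B, hB, hAB⟩ := hQmono A hA
        obtain ⟨hBS, hBmono, -⟩ := hQ1props B hB
        refine ⟨hAB.trans hBS, ?_⟩
        intro j' hj'
        rcases List.mem_cons.mp hj' with h | h
        · subst h; exact hBmono.subset hAB
        · exact hmono' j' h
      · intro i hi
        obtain ⟨B, hB, hiB⟩ := hQ1cov i hi
        exact hQcov B hB i hiB
      · -- the numeric bound
        have hx1 : (1:ℝ) ≤ (s:ℝ) := by exact_mod_cast hs1
        have hsqpos : (0:ℝ) < Real.sqrt s := Real.sqrt_pos.mpr (by linarith)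
        have hsq1 : (1:ℝ) ≤ Real.sqrt s := by
          rw [show (1:ℝ) = Real.sqrt 1 from (Real.sqrt_one).symm]
          exact Real.sqrt_le_sqrt hx1
        have hrsq : Real.sqrt s ≤ (r : ℝ) := by
          have h1 : (s:ℝ) ≤ ((r:ℝ))^2 := by
            have := Nat.lt_succ_sqrt s
            have : s ≤ r ^ 2 := by rw [hrdef]; nlinarith [Nat.lt_succ_sqrt s]
            exact_mod_cast this
          calc Real.sqrt s ≤ Real.sqrt ((r:ℝ)^2) := Real.sqrt_le_sqrt h1
            _ = (r:ℝ) := Real.sqrt_sq (by positivity)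
        have hrsq2 : (r : ℝ) ≤ 2 * Real.sqrt s := by
          have h1 : ((Nat.sqrt s : ℕ) : ℝ) ≤ Real.sqrt s := by
            have h2 : ((Nat.sqrt s : ℕ) : ℝ)^2 ≤ (s:ℝ) := by
              have := Nat.sqrt_le' s
              exact_mod_cast this
            calc ((Nat.sqrt s : ℕ) : ℝ) = Real.sqrt (((Nat.sqrt s : ℕ) : ℝ)^2) :=
                  (Real.sqrt_sq (by positivity)).symm
              _ ≤ Real.sqrt s := Real.sqrt_le_sqrt h2
          rw [hrdef]
          push_cast
          linarith
        have hrpos : (0:ℝ) < (r:ℝ) := by positivity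
        have stepA : ((Q1.map fun B => 8 ^ k * (B.card : ℝ) ^ e).sum) ≤ Q1.length * M := by
          have hb : ∀ x ∈ Q1.map fun B => 8 ^ k * (B.card : ℝ) ^ e, x ≤ M := by
            intro x hx
            obtain ⟨B, hB, rfl⟩ := List.mem_map.mp hx
            rw [hMdef]
            have : ((B.card : ℕ) : ℝ) ≤ (r : ℝ) := by exact_mod_cast (hQ1props B hB).2.2
            exact mul_le_mul_of_nonneg_left
              (Real.rpow_le_rpow (by positivity) this he0) (by positivity)
          have := List.sum_le_card_nsmul _ M hb
          rwa [List.length_map, nsmul_eq_mul] at this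
        have stepB : (Q1.length : ℝ) * M ≤ (2 * (s:ℝ) / r + r) * M :=
          mul_le_mul_of_nonneg_right hQ1len hMnn
        have stepC : 2 * (s:ℝ) / r + r ≤ 4 * Real.sqrt s := by
          have h1 : 2 * (s:ℝ) / r ≤ 2 * (s:ℝ) / Real.sqrt s := by gcongr
          have h2 : 2 * (s:ℝ) / Real.sqrt s = 2 * Real.sqrt s := by
            rw [mul_div_assoc, Real.div_sqrt]
          linarith
        have stepD : M ≤ 8 ^ k * 2 * (Real.sqrt s) ^ e := by
          rw [hMdef]
          have h1 : (r:ℝ) ^ e ≤ (2 * Real.sqrt s) ^ e :=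
            Real.rpow_le_rpow (by positivity) hrsq2 he0
          have h2 : ((2:ℝ) * Real.sqrt s) ^ e = (2:ℝ) ^ e * (Real.sqrt s) ^ e :=
            Real.mul_rpow (by norm_num) (by positivity)
          have h3 : (2:ℝ) ^ e ≤ 2 := by
            calc (2:ℝ) ^ e ≤ (2:ℝ) ^ (1:ℝ) :=
                  Real.rpow_le_rpow_of_exponent_le (by norm_num) he1
              _ = 2 := Real.rpow_one 2
          have h4 : (0:ℝ) ≤ (Real.sqrt s) ^ e := by positivity
          calc (8:ℝ) ^ k * (r:ℝ) ^ e ≤ 8 ^ k * ((2:ℝ) ^ e * (Real.sqrt s) ^ e) := by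
                rw [← h2]; exact mul_le_mul_of_nonneg_left h1 (by positivity)
            _ ≤ 8 ^ k * (2 * (Real.sqrt s) ^ e) := by
                have := mul_le_mul_of_nonneg_right h3 h4
                exact mul_le_mul_of_nonneg_left this (by positivity)
            _ = 8 ^ k * 2 * (Real.sqrt s) ^ e := by ring
        calc (Q.length : ℝ) ≤ (Q1.map fun B => 8 ^ k * (B.card : ℝ) ^ e).sum := hQlen
          _ ≤ Q1.length * M := stepA
          _ ≤ (2 * (s:ℝ) / r + r) * M := stepB
          _ ≤ (4 * Real.sqrt s) * (8 ^ k * 2 * (Real.sqrt s) ^ e) := by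
              apply mul_le_mul stepC stepD hMnn (by positivity)
          _ = 8 ^ (k + 1) * ((Real.sqrt s) ^ (1:ℝ) * (Real.sqrt s) ^ e) := by
              rw [Real.rpow_one]; ring
          _ = 8 ^ (k + 1) * (Real.sqrt s) ^ (1 + e) := by
              rw [← Real.rpow_add hsqpos]
          _ = 8 ^ (k + 1) * ((s:ℝ) ^ ((1:ℝ)/2)) ^ (1 + e) := by
              rw [Real.sqrt_eq_rpow]
          _ = 8 ^ (k + 1) * (s:ℝ) ^ (((1:ℝ)/2) * (1 + e)) := by
              rw [← Real.rpow_mul (by positivity : (0:ℝ) ≤ (s:ℝ))]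
          _ = 8 ^ (j :: L').length * (S.card : ℝ) ^ ((1:ℝ) - (1/2 : ℝ) ^ (j :: L').length) := by
              have hexp : ((1:ℝ)/2) * (1 + e) = (1:ℝ) - (1/2 : ℝ) ^ (k + 1) := by
                rw [hedef]; ring
              rw [hexp]
              simp only [List.length_cons, ← hk, ← hsdef]

end MonoPart

/-- For every `κ ≥ 1` there is a constant `C` such that every sequence of `n` points of
`ℝ^κ` with pairwise distinct values in each coordinate admits a partition of the index
set into at most `C · n^(1 − 1/2^κ)` sets, each monotone in every coordinate. -/
theorem partition_into_monotone_subsequences (κ : ℕ) (hκ : 1 ≤ κ) :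
    ∃ C : ℝ, ∀ (n : ℕ) (τ : Fin n → Fin κ → ℝ),
      (∀ j : Fin κ, Function.Injective fun i => τ i j) →
      ∃ (M : ℕ) (f : Fin n → Fin M),
        (M : ℝ) ≤ C * (n : ℝ) ^ ((1 : ℝ) - 1 / (2 : ℝ) ^ κ) ∧
        ∀ c : Fin M, MonotoneAll τ {i | f i = c} := by
  classical
  refine ⟨(8:ℝ) ^ κ, ?_⟩
  intro n τ _
  obtain ⟨P, hP1, hP2, hP3⟩ := MonoPart.coverAll τ (List.finRange κ) Finset.univ
  have hex : ∀ i : Fin n, P.findIdx (fun A => i ∈ A) < P.length := by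
    intro i
    apply List.findIdx_lt_length_of_exists
    simpa using hP2 i (Finset.mem_univ i)
  refine ⟨P.length, fun i => ⟨P.findIdx (fun A => i ∈ A), hex i⟩, ?_, ?_⟩
  · have hlen : (List.finRange κ).length = κ := List.length_finRange
    have hcard : ((Finset.univ : Finset (Fin n)).card : ℝ) = (n : ℝ) := by
      simp
    rw [hlen, hcard] at hP3
    have hexp : ((1:ℝ) - (1/2 : ℝ) ^ κ) = ((1 : ℝ) - 1 / (2 : ℝ) ^ κ) := by
      rw [div_pow, one_pow]
    rwa [hexp] at hP3
  · rintro ⟨v, hv⟩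
    have hmem : ∀ i : Fin n,
        (⟨P.findIdx (fun A => i ∈ A), hex i⟩ : Fin P.length) = ⟨v, hv⟩ → i ∈ P[v] := by
      intro i h
      have h1 : P.findIdx (fun A => i ∈ A) = v := congrArg Fin.val h
      subst h1
      simpa using List.findIdx_getElem (w := hex i)
    have hA : P[v] ∈ P := List.getElem_mem hv
    obtain ⟨-, hmono⟩ := hP1 P[v] hA
    intro j
    rcases hmono j (List.mem_finRange j) with h | h
    · left
      intro i hi i' hi' hle
      exact h i (hmem i hi) i' (hmem i' hi') hle
    · right
      intro i hi i' hi' hle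
      exact h i (hmem i hi) i' (hmem i' hi') hle
end

section
/- Every sequence x_1, …, x_n of pairwise distinct real numbers admits a partition of the index set {1, …, n} into at most 2⌈√n⌉ monotone index sets, each of size at most ⌈√n⌉. -/
/-- An index set `I` is monotone for the sequence `x` if the map `i ↦ x i` restricted
to `I` (indices in increasing order) is either monotonically increasing or
monotonically decreasing. -/
def MonotoneIdx {n : ℕ} (x : Fin n → ℝ) (I : Set (Fin n)) : Prop :=
  (∀ i ∈ I, ∀ i' ∈ I, i ≤ i' → x i ≤ x i') ∨
  (∀ i ∈ I, ∀ i' ∈ I, i ≤ i' → x i' ≤ x i)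

lemma monotoneIdx_subset {n : ℕ} {x : Fin n → ℝ} {I J : Set (Fin n)} (h : I ⊆ J)
    (hJ : MonotoneIdx x J) : MonotoneIdx x I := by
  rcases hJ with hJ | hJ
  · exact Or.inl fun i hi i' hi' hle => hJ i (h hi) i' (h hi') hle
  · exact Or.inr fun i hi i' hi' hle => hJ i (h hi) i' (h hi') hle

/-- length of longest strictly increasing chain within `T` ending at `i`. -/
noncomputable def chainSup {n : ℕ} (x : Fin n → ℝ) (T : Finset (Fin n)) (i : Fin n) : ℕ :=
  sSup {m | ∃ C : Finset (Fin n), C ⊆ T ∧ i ∈ C ∧ (∀ j ∈ C, j ≤ i) ∧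
    (∀ j ∈ C, ∀ j' ∈ C, j < j' → x j < x j') ∧ C.card = m}

lemma chainSup_bdd {n : ℕ} (x : Fin n → ℝ) (T : Finset (Fin n)) (i : Fin n) :
    BddAbove {m | ∃ C : Finset (Fin n), C ⊆ T ∧ i ∈ C ∧ (∀ j ∈ C, j ≤ i) ∧
      (∀ j ∈ C, ∀ j' ∈ C, j < j' → x j < x j') ∧ C.card = m} := by
  refine ⟨T.card, fun m hm => ?_⟩
  obtain ⟨C, hC, -, -, -, hcard⟩ := hm
  exact hcard ▸ Finset.card_le_card hC

lemma chainSup_singleton_mem {n : ℕ} (x : Fin n → ℝ) {T : Finset (Fin n)} {i : Fin n}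
    (hi : i ∈ T) : (1 : ℕ) ∈ {m | ∃ C : Finset (Fin n), C ⊆ T ∧ i ∈ C ∧ (∀ j ∈ C, j ≤ i) ∧
      (∀ j ∈ C, ∀ j' ∈ C, j < j' → x j < x j') ∧ C.card = m} := by
  refine ⟨{i}, Finset.singleton_subset_iff.mpr hi, Finset.mem_singleton_self i, ?_, ?_, ?_⟩
  · intro j hj; rw [Finset.mem_singleton] at hj; exact hj.le
  · intro j hj j' hj' hlt
    rw [Finset.mem_singleton] at hj hj'
    rw [hj, hj'] at hlt
    exact absurd hlt (lt_irrefl i)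
  · simp

lemma chainSup_spec {n : ℕ} (x : Fin n → ℝ) {T : Finset (Fin n)} {i : Fin n} (hi : i ∈ T) :
    ∃ C : Finset (Fin n), C ⊆ T ∧ i ∈ C ∧ (∀ j ∈ C, j ≤ i) ∧
      (∀ j ∈ C, ∀ j' ∈ C, j < j' → x j < x j') ∧ C.card = chainSup x T i :=
  Nat.sSup_mem ⟨1, chainSup_singleton_mem x hi⟩ (chainSup_bdd x T i)

lemma chainSup_pos {n : ℕ} (x : Fin n → ℝ) {T : Finset (Fin n)} {i : Fin n} (hi : i ∈ T) :
    1 ≤ chainSup x T i :=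
  le_csSup (chainSup_bdd x T i) (chainSup_singleton_mem x hi)

lemma chainSup_lt {n : ℕ} (x : Fin n → ℝ) {T : Finset (Fin n)} {i i' : Fin n}
    (hi : i ∈ T) (hi' : i' ∈ T) (hlt : i < i') (hxy : x i < x i') :
    chainSup x T i < chainSup x T i' := by
  obtain ⟨C, hCT, hiC, hle, hchain, hcard⟩ := chainSup_spec x hi
  have hnot : i' ∉ C := fun h => absurd (hle i' h) (not_le.mpr hlt)
  have hmem : chainSup x T i + 1 ∈ {m | ∃ C : Finset (Fin n), C ⊆ T ∧ i' ∈ C ∧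
      (∀ j ∈ C, j ≤ i') ∧ (∀ j ∈ C, ∀ j' ∈ C, j < j' → x j < x j') ∧ C.card = m} := by
    refine ⟨insert i' C, Finset.insert_subset hi' hCT, Finset.mem_insert_self _ _, ?_, ?_, ?_⟩
    · intro j hj
      rcases Finset.mem_insert.mp hj with rfl | hj
      · exact le_refl _
      · exact (hle j hj).trans hlt.le
    · intro j hj j' hj' hjj
      rcases Finset.mem_insert.mp hj with hj1 | hj2
      · rcases Finset.mem_insert.mp hj' with hj'1 | hj'2
        · rw [hj1, hj'1] at hjj
          exact absurd hjj (lt_irrefl _)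
        · rw [hj1] at hjj
          exact absurd ((hjj.trans_le (hle j' hj'2)).trans hlt) (lt_irrefl _)
      · rcases Finset.mem_insert.mp hj' with hj'1 | hj'2
        · rw [hj'1]
          rcases eq_or_lt_of_le (hle j hj2) with hji | hji
          · rw [hji]; exact hxy
          · exact (hchain j hj2 i hiC hji).trans hxy
        · exact hchain j hj2 j' hj'2 hjj
    · rw [Finset.card_insert_of_notMem hnot, hcard]
  have h5 : chainSup x T i + 1 ≤ chainSup x T i' := le_csSup (chainSup_bdd x T i') hmem
  omega

lemma chainSup_le {n : ℕ} (x : Fin n → ℝ) {T : Finset (Fin n)} {i : Fin n} {k : ℕ}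
    (hi : i ∈ T)
    (h : ∀ C : Finset (Fin n), C ⊆ T → (∀ j ∈ C, ∀ j' ∈ C, j < j' → x j < x j') → C.card ≤ k) :
    chainSup x T i ≤ k := by
  refine csSup_le ⟨1, chainSup_singleton_mem x hi⟩ ?_
  rintro m ⟨C, hCT, -, -, hchain, rfl⟩
  exact h C hCT hchain

/-- Erdős–Szekeres-type extraction: a set of more than `k*k` indices contains a monotone
subset of size exactly `k+1`. -/
lemma exists_monotone_subset {n : ℕ} (x : Fin n → ℝ) (hx : Function.Injective x)
    (T : Finset (Fin n)) (k : ℕ) (h : k * k < T.card) :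
    ∃ C : Finset (Fin n), C ⊆ T ∧ C.card = k + 1 ∧ MonotoneIdx x ↑C := by
  by_cases hex : ∃ C : Finset (Fin n), C ⊆ T ∧ k + 1 ≤ C.card ∧
      ((∀ j ∈ C, ∀ j' ∈ C, j < j' → x j < x j') ∨ (∀ j ∈ C, ∀ j' ∈ C, j < j' → x j' < x j))
  · obtain ⟨C, hCT, hcard, hchain⟩ := hex
    obtain ⟨C', hC'C, hC'card⟩ := Finset.exists_subset_card_eq hcard
    refine ⟨C', hC'C.trans hCT, hC'card, ?_⟩
    rcases hchain with hc | hc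
    · left
      intro i hi i' hi' hle
      rcases eq_or_lt_of_le hle with rfl | hlt
      · exact le_refl _
      · exact (hc i (hC'C hi) i' (hC'C hi') hlt).le
    · right
      intro i hi i' hi' hle
      rcases eq_or_lt_of_le hle with rfl | hlt
      · exact le_refl _
      · exact (hc i (hC'C hi) i' (hC'C hi') hlt).le
  · exfalso
    have hup : ∀ C : Finset (Fin n), C ⊆ T →
        (∀ j ∈ C, ∀ j' ∈ C, j < j' → x j < x j') → C.card ≤ k := by
      intro C hCT hc
      by_contra hcon
      exact hex ⟨C, hCT, by omega, Or.inl hc⟩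
    have hdn : ∀ C : Finset (Fin n), C ⊆ T →
        (∀ j ∈ C, ∀ j' ∈ C, j < j' → (-x) j < (-x) j') → C.card ≤ k := by
      intro C hCT hc
      by_contra hcon
      refine hex ⟨C, hCT, by omega, Or.inr ?_⟩
      intro j hj j' hj' hjj
      have := hc j hj j' hj' hjj
      simpa using this
    have key : T.card ≤ (Finset.range k ×ˢ Finset.range k).card := by
      apply Finset.card_le_card_of_injOn
        (fun i => (chainSup x T i - 1, chainSup (-x) T i - 1))
      · intro i hi
        have h1 := chainSup_pos x hi
        have h2 := chainSup_pos (-x) hi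
        have h3 := chainSup_le x hi hup
        have h4 := chainSup_le (-x) hi hdn
        simp only [Finset.mem_coe] at hi
        simp only [Finset.mem_coe, Finset.mem_product, Finset.mem_range]
        omega
      · intro i hi i' hi' heq
        simp only [Finset.mem_coe] at hi hi'
        by_contra hne
        have h1 := congrArg Prod.fst heq
        have h2 := congrArg Prod.snd heq
        simp only at h1 h2
        have hxne : x i ≠ x i' := fun hc => hne (hx hc)
        rcases lt_or_gt_of_ne hne with hlt | hlt
        · rcases lt_or_gt_of_ne hxne with hxy | hxy
          · have := chainSup_lt x hi hi' hlt hxy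
            have := chainSup_pos x hi
            omega
          · have := chainSup_lt (-x) hi hi' hlt (by simpa using hxy)
            have := chainSup_pos (-x) hi
            omega
        · rcases lt_or_gt_of_ne hxne with hxy | hxy
          · have := chainSup_lt (-x) hi' hi hlt (by simpa using hxy)
            have := chainSup_pos (-x) hi'
            omega
          · have := chainSup_lt x hi' hi hlt hxy
            have := chainSup_pos x hi'
            omega
    rw [Finset.card_product, Finset.card_range] at key
    omega

/-- Adding one extra monotone block as a new color. -/
lemma combine {n : ℕ} (x : Fin n → ℝ) (T C : Finset (Fin n)) (K : ℕ)
    (hCT : C ⊆ T) (hmono : MonotoneIdx x ↑C) (hCcard : C.card ≤ K)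
    (m : ℕ) (f : Fin n → ℕ)
    (h1 : ∀ i ∈ T \ C, f i < m)
    (h2 : ∀ c : ℕ, MonotoneIdx x (↑(T \ C) ∩ {i | f i = c}) ∧
      (↑(T \ C) ∩ {i | f i = c} : Set (Fin n)).ncard ≤ K) :
    ∃ g : Fin n → ℕ, (∀ i ∈ T, g i < m + 1) ∧
      ∀ c : ℕ, MonotoneIdx x (↑T ∩ {i | g i = c}) ∧
        (↑T ∩ {i | g i = c} : Set (Fin n)).ncard ≤ K := by
  classical
  refine ⟨fun i => if i ∈ C then m else f i, ?_, ?_⟩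
  · intro i hi
    by_cases hiC : i ∈ C
    · simp [hiC]
    · simp only [if_neg hiC]
      have := h1 i (Finset.mem_sdiff.mpr ⟨hi, hiC⟩)
      omega
  · intro c
    by_cases hcm : c = m
    · rw [hcm]
      have hset : (↑T ∩ {i | (if i ∈ C then m else f i) = m} : Set (Fin n)) = ↑C := by
        ext i
        simp only [Set.mem_inter_iff, Finset.mem_coe, Set.mem_setOf_eq]
        constructor
        · rintro ⟨hiT, hif⟩
          by_contra hiC
          rw [if_neg hiC] at hif
          have := h1 i (Finset.mem_sdiff.mpr ⟨hiT, hiC⟩)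
          omega
        · intro hiC
          exact ⟨hCT hiC, by rw [if_pos hiC]⟩
      rw [hset]
      exact ⟨hmono, by rw [Set.ncard_coe_finset]; exact hCcard⟩
    · have hset : (↑T ∩ {i | (if i ∈ C then m else f i) = c} : Set (Fin n)) =
          ↑(T \ C) ∩ {i | f i = c} := by
        ext i
        simp only [Set.mem_inter_iff, Finset.mem_coe, Set.mem_setOf_eq, Finset.mem_sdiff]
        constructor
        · rintro ⟨hiT, hif⟩
          by_cases hiC : i ∈ C
          · rw [if_pos hiC] at hif; exact absurd hif.symm hcm
          · rw [if_neg hiC] at hif; exact ⟨⟨hiT, hiC⟩, hif⟩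
        · rintro ⟨⟨hiT, hiC⟩, hif⟩
          exact ⟨hiT, by rw [if_neg hiC]; exact hif⟩
      rw [hset]
      exact h2 c

lemma partition_aux {n : ℕ} (x : Fin n → ℝ) (hx : Function.Injective x) :
    ∀ k : ℕ, ∀ T : Finset (Fin n), T.card ≤ k * k →
    ∃ (m : ℕ) (f : Fin n → ℕ), m ≤ 2 * k ∧ (∀ i ∈ T, f i < m) ∧
      ∀ c : ℕ, MonotoneIdx x (↑T ∩ {i | f i = c}) ∧
        (↑T ∩ {i | f i = c} : Set (Fin n)).ncard ≤ k := by
  intro k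
  induction k with
  | zero =>
    intro T hT
    have : T = ∅ := Finset.card_eq_zero.mp (Nat.le_zero.mp hT)
    subst this
    refine ⟨0, fun _ => 0, le_refl _, fun i hi => absurd hi (Finset.notMem_empty i), fun c => ?_⟩
    have : (↑(∅ : Finset (Fin n)) ∩ {i | (0 : ℕ) = c} : Set (Fin n)) = ∅ := by
      simp
    rw [this]
    exact ⟨Or.inl fun i hi => absurd hi (Set.notMem_empty i), by simp⟩
  | succ k ih =>
    intro T hT
    -- helper to weaken a (k)-result to (k+1)
    by_cases h1 : T.card ≤ k * k
    · obtain ⟨m, f, hm, hf, hfib⟩ := ih T h1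
      exact ⟨m, f, by omega, hf, fun c => ⟨(hfib c).1, (hfib c).2.trans (by omega)⟩⟩
    · push_neg at h1
      obtain ⟨C₁, hC₁T, hC₁card, hC₁mono⟩ := exists_monotone_subset x hx T k (by omega)
      have hT₁card : (T \ C₁).card = T.card - (k + 1) := by
        rw [Finset.card_sdiff_of_subset hC₁T, hC₁card]
      by_cases h2 : (T \ C₁).card ≤ k * k
      · obtain ⟨m, f, hm, hf, hfib⟩ := ih (T \ C₁) h2
        have hfib' : ∀ c : ℕ, MonotoneIdx x (↑(T \ C₁) ∩ {i | f i = c}) ∧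
            (↑(T \ C₁) ∩ {i | f i = c} : Set (Fin n)).ncard ≤ k + 1 :=
          fun c => ⟨(hfib c).1, (hfib c).2.trans (by omega)⟩
        obtain ⟨g, hg, hgfib⟩ := combine x T C₁ (k + 1) hC₁T hC₁mono (by omega) m f hf hfib'
        exact ⟨m + 1, g, by omega, hg, hgfib⟩
      · push_neg at h2
        obtain ⟨C₂, hC₂T, hC₂card, hC₂mono⟩ := exists_monotone_subset x hx (T \ C₁) k (by omega)
        have hT₂card : ((T \ C₁) \ C₂).card = T.card - (k + 1) - (k + 1) := by
          rw [Finset.card_sdiff_of_subset hC₂T, hT₁card, hC₂card]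
        have hT₂le : ((T \ C₁) \ C₂).card ≤ k * k := by
          have e1 : (k + 1) * (k + 1) = k * k + 2 * k + 1 := by ring
          omega
        obtain ⟨m, f, hm, hf, hfib⟩ := ih ((T \ C₁) \ C₂) hT₂le
        have hfib' : ∀ c : ℕ, MonotoneIdx x (↑((T \ C₁) \ C₂) ∩ {i | f i = c}) ∧
            (↑((T \ C₁) \ C₂) ∩ {i | f i = c} : Set (Fin n)).ncard ≤ k + 1 :=
          fun c => ⟨(hfib c).1, (hfib c).2.trans (by omega)⟩
        obtain ⟨g, hg, hgfib⟩ :=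
          combine x (T \ C₁) C₂ (k + 1) hC₂T hC₂mono (by omega) m f hf hfib'
        obtain ⟨g', hg', hg'fib⟩ :=
          combine x T C₁ (k + 1) hC₁T hC₁mono (by omega) (m + 1) g hg hgfib
        exact ⟨m + 2, g', by omega, hg', hg'fib⟩

/-- Every sequence of `n` pairwise distinct reals admits a partition of the index set
into at most `2⌈√n⌉` monotone index sets, each of size at most `⌈√n⌉`. -/
theorem partition_into_short_monotone_subsequences
    (n : ℕ) (x : Fin n → ℝ) (hx : Function.Injective x) :
    ∃ (M : ℕ) (f : Fin n → Fin M),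
      M ≤ 2 * ⌈Real.sqrt n⌉₊ ∧
      ∀ c : Fin M, MonotoneIdx x {i | f i = c} ∧
        ({i | f i = c} : Set (Fin n)).ncard ≤ ⌈Real.sqrt n⌉₊ := by
  rcases Nat.eq_zero_or_pos n with rfl | hn
  · exact ⟨0, fun i => i.elim0, by omega, fun c => c.elim0⟩
  · set s := ⌈Real.sqrt n⌉₊ with hs
    have hns : n ≤ s * s := by
      have h1 : Real.sqrt n ≤ s := Nat.le_ceil _
      have h2 : (n : ℝ) = Real.sqrt n * Real.sqrt n :=
        (Real.mul_self_sqrt (by positivity)).symm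
      have h3 : (n : ℝ) ≤ (s : ℝ) * (s : ℝ) := by
        rw [h2]
        exact mul_le_mul h1 h1 (Real.sqrt_nonneg _) (by positivity)
      have h4 : (n : ℝ) ≤ ((s * s : ℕ) : ℝ) := by push_cast; exact h3
      exact_mod_cast h4
    obtain ⟨m, f, hm, hf, hfib⟩ := partition_aux x hx s Finset.univ (by simpa using hns)
    have hmpos : 0 < m := by
      have := hf ⟨0, hn⟩ (Finset.mem_univ _)
      omega
    refine ⟨m, fun i => ⟨f i, hf i (Finset.mem_univ i)⟩, hm, fun c => ?_⟩
    have hset : ({i | (⟨f i, hf i (Finset.mem_univ i)⟩ : Fin m) = c} : Set (Fin n)) =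
        ↑(Finset.univ : Finset (Fin n)) ∩ {i | f i = (c : ℕ)} := by
      ext i
      simp [Fin.ext_iff]
    rw [hset]
    exact hfib (c : ℕ)
end

section
/- For every integer κ ≥ 1, every sequence τ_1, …, τ_n of points of ℝ^κ whose values in each coordinate are pairwise distinct contains an index set of size at least n^{1/2^κ} that is monotone in every coordinate. -/
variable {α : Type*} [LinearOrder α] {β : Type*}

open Function Finset

/-- **Erdős–Szekeres Theorem** (inlined from the Mathlib Archive). -/
theorem my_erdos_szekeres {r s n : ℕ} {f : Fin n → α} (hn : r * s < n) (hf : Injective f) :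
    (∃ t : Finset (Fin n), r < #t ∧ StrictMonoOn f ↑t) ∨
      ∃ t : Finset (Fin n), s < #t ∧ StrictAntiOn f ↑t := by
  let inc_sequences_ending_in : Fin n → Finset (Finset (Fin n)) := fun i =>
    univ.powerset.filter fun t => Finset.max t = i ∧ StrictMonoOn f ↑t
  let dec_sequences_ending_in : Fin n → Finset (Finset (Fin n)) := fun i =>
    univ.powerset.filter fun t => Finset.max t = i ∧ StrictAntiOn f ↑t
  have inc_i : ∀ i, {i} ∈ inc_sequences_ending_in i := fun i => by
    simp [inc_sequences_ending_in, StrictMonoOn]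
  have dec_i : ∀ i, {i} ∈ dec_sequences_ending_in i := fun i => by
    simp [dec_sequences_ending_in, StrictAntiOn]
  let ab' : Fin n → ℕ × ℕ := by
    intro i
    apply
      (max' ((inc_sequences_ending_in i).image card) (Nonempty.image ⟨{i}, inc_i i⟩ _),
        max' ((dec_sequences_ending_in i).image card) (Nonempty.image ⟨{i}, dec_i i⟩ _))
  generalize hab : ab' = ab
  rsuffices ⟨i, hi⟩ : ∃ i, r < (ab i).1 ∨ s < (ab i).2
  · refine Or.imp ?_ ?_ hi
    on_goal 1 =>
      have : (ab i).1 ∈ image card (inc_sequences_ending_in i) := by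
        simp only [← hab]; exact max'_mem _ (Nonempty.image ⟨{i}, inc_i i⟩ _)
    on_goal 2 =>
      have : (ab i).2 ∈ image card (dec_sequences_ending_in i) := by
        simp only [← hab]; exact max'_mem _ (Nonempty.image ⟨{i}, dec_i i⟩ _)
    all_goals
      intro hi
      rw [mem_image] at this
      obtain ⟨t, ht₁, ht₂⟩ := this
      refine ⟨t, by rwa [ht₂], ?_⟩
      rw [mem_filter] at ht₁
      apply ht₁.2.2
  have : Injective ab := by
    simp only [← hab]
    apply Function.Injective.of_lt_imp_ne
    intro i j k q
    injection q with q₁ q₂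
    cases lt_or_gt_of_ne fun _ => ne_of_lt ‹i < j› (hf ‹f i = f j›)
    on_goal 1 =>
      apply ne_of_lt _ q₁
      have : (ab' i).1 ∈ image card (inc_sequences_ending_in i) := by exact max'_mem _ (Nonempty.image ⟨{i}, inc_i i⟩ _)
    on_goal 2 =>
      apply ne_of_lt _ q₂
      have : (ab' i).2 ∈ image card (dec_sequences_ending_in i) := by exact max'_mem _ (Nonempty.image ⟨{i}, dec_i i⟩ _)
    all_goals
      rw [Nat.lt_iff_add_one_le]
      apply le_max'
      rw [mem_image] at this ⊢
      rcases this with ⟨t, ht₁, ht₂⟩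
      rw [mem_filter] at ht₁
      have : t.max = i := by simp only [ht₁.2.1]
      refine ⟨insert j t, ?_, ?_⟩
      · rw [mem_filter]
        refine ⟨?_, ?_, ?_⟩
        · rw [mem_powerset]; apply subset_univ
        · convert max_insert (a := j) (s := t)
          rw [ht₁.2.1, max_eq_left]
          apply WithBot.coe_le_coe.mpr (le_of_lt ‹i < j›)
        simp only [StrictMonoOn, StrictAntiOn, coe_insert, Set.mem_insert_iff, mem_coe]
        rintro x ⟨rfl | _⟩ y ⟨rfl | _⟩ _
        · apply (irrefl _ ‹j < j›).elim
        · exfalso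
          apply not_le_of_gt (_root_.trans ‹i < j› ‹j < y›) (le_max_of_eq ‹y ∈ t› ‹t.max = i›)
        · first
          | apply lt_of_le_of_lt _ ‹f i < f j›
          | apply lt_of_lt_of_le ‹f j < f i› _
          rcases lt_or_eq_of_le (le_max_of_eq ‹x ∈ t› ‹t.max = i›) with (_ | rfl)
          · apply le_of_lt (ht₁.2.2 ‹x ∈ t› (mem_of_max ‹t.max = i›) ‹x < i›)
          · rfl
        · apply ht₁.2.2 ‹x ∈ t› ‹y ∈ t› ‹x < y›
      · rw [card_insert_of_notMem, ht₂]
        intro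
        apply not_le_of_gt ‹i < j› (le_max_of_eq ‹j ∈ t› ‹t.max = i›)
  by_contra! q
  let ran : Finset (ℕ × ℕ) := (range r).image Nat.succ ×ˢ (range s).image Nat.succ
  have : image ab univ ⊆ ran := by
    rintro ⟨x₁, x₂⟩
    simp only [ran, mem_image, exists_prop, mem_range, mem_univ, mem_product, true_and,
      Prod.ext_iff]
    rintro ⟨i, rfl, rfl⟩
    specialize q i
    have z : 1 ≤ (ab i).1 ∧ 1 ≤ (ab i).2 := by
      simp only [← hab]
      constructor <;>
        · apply le_max'
          rw [mem_image]
          exact ⟨{i}, by solve_by_elim, card_singleton i⟩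
    exact ⟨⟨(ab i).1 - 1, by omega⟩, (ab i).2 - 1, by omega⟩
  apply not_le_of_gt hn
  simpa [ran, Nat.succ_injective, card_image_of_injective, ‹Injective ab›] using card_le_card this

/-- One Erdős–Szekeres step on a finite subset: extract a subset of size at least the
square root which is strictly monotone for `g`. -/
theorem sqrt_step {n : ℕ} (g : Fin n → ℝ) (hg : Injective g) (T : Finset (Fin n)) :
    ∃ U : Finset (Fin n), U ⊆ T ∧ T.card ≤ U.card ^ 2 ∧
      (StrictMonoOn g ↑U ∨ StrictAntiOn g ↑U) := by
  rcases Nat.eq_zero_or_pos T.card with h0 | hpos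
  · exact ⟨T, Finset.Subset.refl _, by simp [h0], Or.inl (by
      intro x hx; exfalso
      have := Finset.card_eq_zero.mp h0
      simp [this] at hx)⟩
  · set m := Nat.sqrt (T.card - 1) with hm
    have hlt : m * m < T.card := by
      have h := Nat.sqrt_le (T.card - 1)
      rw [hm]
      omega
    have hub : T.card ≤ (m + 1) ^ 2 := by
      have h2 := Nat.lt_succ_sqrt (T.card - 1)
      simp only [Nat.succ_eq_add_one] at h2
      rw [pow_two, hm]
      omega
    set e := T.orderIsoOfFin (rfl : T.card = T.card) with he
    have hecoe : Injective fun i : Fin T.card => ((e i : Fin n)) := by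
      intro a b hab
      exact e.injective (Subtype.ext hab)
    have hfinj : Injective fun i : Fin T.card => g (e i) := fun a b hab =>
      hecoe (hg hab)
    have key : ∀ t : Finset (Fin T.card), m < t.card →
        (t.image fun i => (e i : Fin n)) ⊆ T ∧
        T.card ≤ (t.image fun i => (e i : Fin n)).card ^ 2 := by
      intro t ht
      refine ⟨?_, ?_⟩
      · intro x hx
        rcases Finset.mem_image.mp hx with ⟨a, _, rfl⟩
        exact (e a).2
      · rw [Finset.card_image_of_injective _ hecoe]
        calc T.card ≤ (m + 1) ^ 2 := hub
          _ ≤ t.card ^ 2 := Nat.pow_le_pow_left (by omega) 2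
    have hab' : ∀ t : Finset (Fin T.card), ∀ a ∈ t, ∀ b ∈ t,
        ((e a : Fin n)) < ((e b : Fin n)) → a < b := by
      intro t a _ b _ hxy
      exact e.lt_iff_lt.mp (Subtype.coe_lt_coe.mp hxy)
    rcases my_erdos_szekeres (r := m) (s := m) hlt hfinj with ⟨t, ht, hmono⟩ | ⟨t, ht, hmono⟩
    · refine ⟨t.image fun i => (e i : Fin n), (key t ht).1, (key t ht).2, Or.inl ?_⟩
      intro x hx y hy hxy
      rcases Finset.mem_image.mp hx with ⟨a, ha, rfl⟩
      rcases Finset.mem_image.mp hy with ⟨b, hb, rfl⟩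
      exact hmono ha hb (hab' t a ha b hb hxy)
    · refine ⟨t.image fun i => (e i : Fin n), (key t ht).1, (key t ht).2, Or.inr ?_⟩
      intro x hx y hy hxy
      rcases Finset.mem_image.mp hx with ⟨a, ha, rfl⟩
      rcases Finset.mem_image.mp hy with ⟨b, hb, rfl⟩
      exact hmono ha hb (hab' t a ha b hb hxy)

/-- Iterated Erdős–Szekeres: a subset strictly monotone in all coordinates `< k`. -/
theorem iterated_step {κ n : ℕ} (τ : Fin n → Fin κ → ℝ)
    (hτ : ∀ j : Fin κ, Injective fun i => τ i j) :
    ∀ k : ℕ, k ≤ κ → ∀ S : Finset (Fin n), ∃ T : Finset (Fin n), T ⊆ S ∧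
      S.card ≤ T.card ^ 2 ^ k ∧
      ∀ j : Fin κ, (j : ℕ) < k →
        (StrictMonoOn (fun i => τ i j) ↑T ∨ StrictAntiOn (fun i => τ i j) ↑T) := by
  intro k
  induction k with
  | zero =>
    intro _ S
    exact ⟨S, Finset.Subset.refl _, by simp, fun j hj => absurd hj (by omega)⟩
  | succ k ih =>
    intro hk S
    obtain ⟨T, hTS, hTcard, hTmono⟩ := ih (by omega) S
    obtain ⟨U, hUT, hUcard, hUmono⟩ := sqrt_step (fun i => τ i ⟨k, by omega⟩)
      (hτ ⟨k, by omega⟩) T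
    refine ⟨U, hUT.trans hTS, ?_, ?_⟩
    · calc S.card ≤ T.card ^ 2 ^ k := hTcard
        _ ≤ (U.card ^ 2) ^ 2 ^ k := Nat.pow_le_pow_left hUcard _
        _ = U.card ^ 2 ^ (k + 1) := by rw [← pow_mul, pow_succ, mul_comm]
    · intro j hj
      rcases Nat.lt_or_ge (j : ℕ) k with h | h
      · rcases hTmono j h with hmono | hmono
        · exact Or.inl (hmono.mono (Finset.coe_subset.mpr hUT))
        · exact Or.inr (hmono.mono (Finset.coe_subset.mpr hUT))
      · have hjk : (j : ℕ) = k := by omega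
        have : j = ⟨k, by omega⟩ := Fin.ext (by simp [hjk])
        rw [this]
        exact hUmono

/-- For every `κ ≥ 1`, every sequence of `n` points of `ℝ^κ` with pairwise distinct
values in each coordinate contains an index set of size at least `n^(1/2^κ)` that is
monotone in every coordinate. -/
theorem exists_long_monotone_subsequence (κ : ℕ) (hκ : 1 ≤ κ)
    (n : ℕ) (τ : Fin n → Fin κ → ℝ)
    (hτ : ∀ j : Fin κ, Function.Injective fun i => τ i j) :
    ∃ I : Finset (Fin n),
      (n : ℝ) ^ ((1 : ℝ) / (2 : ℝ) ^ κ) ≤ (I.card : ℝ) ∧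
      MonotoneAll τ (I : Set (Fin n)) := by
  obtain ⟨T, _, hcard, hmono⟩ := iterated_step τ hτ κ le_rfl Finset.univ
  rw [Finset.card_univ, Fintype.card_fin] at hcard
  refine ⟨T, ?_, ?_⟩
  · have h1 : (n : ℝ) ≤ (T.card : ℝ) ^ (2 ^ κ : ℕ) := by exact_mod_cast hcard
    have h2 : ((0:ℝ)) ≤ (1:ℝ) / (2:ℝ) ^ κ := by positivity
    have h3 := Real.rpow_le_rpow (by positivity) h1 h2
    calc (n : ℝ) ^ ((1 : ℝ) / (2 : ℝ) ^ κ)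
        ≤ ((T.card : ℝ) ^ (2 ^ κ : ℕ)) ^ ((1 : ℝ) / (2 : ℝ) ^ κ) := h3
      _ = (T.card : ℝ) ^ (((2 ^ κ : ℕ) : ℝ) * ((1 : ℝ) / (2 : ℝ) ^ κ)) := by
          rw [← Real.rpow_natCast (T.card : ℝ) (2 ^ κ), ← Real.rpow_mul (by positivity)]
      _ = (T.card : ℝ) := by
          rw [show (((2 ^ κ : ℕ) : ℝ) * ((1 : ℝ) / (2 : ℝ) ^ κ)) = 1 by
            push_cast; field_simp, Real.rpow_one]
  · intro j
    rcases hmono j j.2 with h | h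
    · left
      intro i hi i' hi' hle
      rcases eq_or_lt_of_le hle with rfl | hlt
      · exact le_refl _
      · exact le_of_lt (h hi hi' hlt)
    · right
      intro i hi i' hi' hle
      rcases eq_or_lt_of_le hle with rfl | hlt
      · exact le_refl _
      · exact le_of_lt (h hi hi' hlt)
end

section
/- Let α ≥ 1 be an integer and let B ⊆ {1, …, α}. Write B as the disjoint union of its maximal runs R_1, …, R_m, that is, the inclusion-maximal sets of consecutive integers contained in B. Then the sum over i = 1, …, m of min(|R_i|, 3) is at most 3(α+1)/4. -/
/-- `R` is a run of `B`: a nonempty set of consecutive integers contained in `B`. -/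
def IsRun (B R : Finset ℕ) : Prop :=
  R.Nonempty ∧ R ⊆ B ∧ ∀ a ∈ R, ∀ b ∈ R, ∀ c : ℕ, a ≤ c → c ≤ b → c ∈ R

/-- `R` is a maximal run of `B`: a run of `B` that is inclusion-maximal among the runs
of `B`. -/
def IsMaximalRun (B R : Finset ℕ) : Prop :=
  IsRun B R ∧ ∀ R' : Finset ℕ, IsRun B R' → R ⊆ R' → R' = R

/-- Let `α ≥ 1` and `B ⊆ {1, …, α}`, and write `B` as the disjoint union of its maximal
runs `R 0, …, R (m-1)`. Then `∑ i, min |R i| 3 ≤ 3(α+1)/4`, i.e.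
`4 · ∑ i, min |R i| 3 ≤ 3(α+1)`. -/
theorem sum_min_card_runs_le (α : ℕ) (hα : 1 ≤ α) (B : Finset ℕ)
    (hB : B ⊆ Finset.Icc 1 α) (m : ℕ) (R : Fin m → Finset ℕ)
    (hrun : ∀ i, IsMaximalRun B (R i))
    (hdisj : ∀ i j : Fin m, i ≠ j → Disjoint (R i) (R j))
    (hcover : ∀ x : ℕ, x ∈ B ↔ ∃ i, x ∈ R i) :
    4 * ∑ i, min (R i).card 3 ≤ 3 * (α + 1) := by
  classical
  have hne : ∀ i, (R i).Nonempty := fun i => (hrun i).1.1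
  set R' : Fin m → Finset ℕ := fun i => insert ((R i).max' (hne i) + 1) (R i) with hR'
  -- the successor of the max of a maximal run is not in B
  have hmaxB : ∀ i, (R i).max' (hne i) + 1 ∉ B := by
    intro i hmem
    set M := (R i).max' (hne i) with hM
    have hMmem : M ∈ R i := Finset.max'_mem _ _
    have hrunbig : IsRun B (insert (M + 1) (R i)) := by
      refine ⟨⟨_, Finset.mem_insert_self _ _⟩, ?_, ?_⟩
      · intro x hx
        rcases Finset.mem_insert.1 hx with h | h
        · rwa [h]
        · exact (hrun i).1.2.1 h
      · intro a ha b hb c hac hcb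
        rcases Finset.mem_insert.1 ha with ha' | ha'
        · rcases Finset.mem_insert.1 hb with hb' | hb'
          · have : c = M + 1 := le_antisymm (hb' ▸ hcb) (ha' ▸ hac)
            simp [this]
          · have hbM : b ≤ M := Finset.le_max' _ _ hb'
            exfalso; omega
        · rcases Finset.mem_insert.1 hb with hb' | hb'
          · by_cases hc : c ≤ M
            · exact Finset.mem_insert_of_mem ((hrun i).1.2.2 a ha' M hMmem c hac hc)
            · have : c = M + 1 := by omega
              simp [this]
          · exact Finset.mem_insert_of_mem ((hrun i).1.2.2 a ha' b hb' c hac hcb)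
    have heq := (hrun i).2 _ hrunbig (Finset.subset_insert _ _)
    have : M + 1 ∈ R i := heq ▸ Finset.mem_insert_self _ _
    have := Finset.le_max' _ _ this
    omega
  have hmaxnot : ∀ i, (R i).max' (hne i) + 1 ∉ R i :=
    fun i h => hmaxB i ((hrun i).1.2.1 h)
  have hcard : ∀ i, (R' i).card = (R i).card + 1 := fun i =>
    Finset.card_insert_of_notMem (hmaxnot i)
  have hdisj' : ∀ i j : Fin m, i ≠ j → Disjoint (R' i) (R' j) := by
    intro i j hij
    rw [Finset.disjoint_left]
    intro x hxi hxj
    rcases Finset.mem_insert.1 hxi with h1 | h1 <;>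
      rcases Finset.mem_insert.1 hxj with h2 | h2
    · have hMi : (R i).max' (hne i) ∈ R i := Finset.max'_mem _ _
      have hMj : (R j).max' (hne j) ∈ R j := Finset.max'_mem _ _
      have : (R i).max' (hne i) = (R j).max' (hne j) := by omega
      exact (Finset.disjoint_left.1 (hdisj i j hij)) hMi (this ▸ hMj)
    · exact hmaxB i (h1 ▸ (hrun j).1.2.1 h2)
    · exact hmaxB j (h2 ▸ (hrun i).1.2.1 h1)
    · exact (Finset.disjoint_left.1 (hdisj i j hij)) h1 h2
  have hsub : (Finset.univ.biUnion R') ⊆ Finset.Icc 1 (α + 1) := by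
    intro x hx
    rcases Finset.mem_biUnion.1 hx with ⟨i, _, hxi⟩
    rcases Finset.mem_insert.1 hxi with h | h
    · have hMi : (R i).max' (hne i) ∈ R i := Finset.max'_mem _ _
      have := Finset.mem_Icc.1 (hB ((hrun i).1.2.1 hMi))
      rw [Finset.mem_Icc]; omega
    · have := Finset.mem_Icc.1 (hB ((hrun i).1.2.1 h))
      rw [Finset.mem_Icc]; omega
  have hsum : ∑ i, (R' i).card ≤ α + 1 := by
    rw [← Finset.card_biUnion (fun i _ j _ h => hdisj' i j h)]
    calc (Finset.univ.biUnion R').card ≤ (Finset.Icc 1 (α + 1)).card :=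
          Finset.card_le_card hsub
      _ = α + 1 := by simp
  calc 4 * ∑ i, min (R i).card 3 = ∑ i, 4 * min (R i).card 3 := Finset.mul_sum _ _ _
    _ ≤ ∑ i, 3 * (R' i).card := Finset.sum_le_sum (fun i _ => by
        have := hcard i; omega)
    _ = 3 * ∑ i, (R' i).card := (Finset.mul_sum _ _ _).symm
    _ ≤ 3 * (α + 1) := Nat.mul_le_mul_left 3 hsum
end
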